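/- arXiv:0906.2290 — 9 statements merged into one kernel-verified Lean document; each statement's English description precedes it below -/
import Mathlib

section
/- Let R > 0, v₀ ∈ ℝ and k ≥ 0 with (k > 0 or v₀ ≥ 0). Set C = v₀² + k/R². Then R² + 2 v₀ R t + C t² > 0 for all t ≥ 0, and the function X(t) = √(R² + 2 v₀ R t + C t²) is twice continuously differentiable on [0,∞) and satisfies X″(t) = k / X(t)³ for all t ≥ 0, with X(0) = R and X′(0) = v₀. -/
/-!
For a quadratic `Q(t) = a + b t + c t²`, the function `X = √Q` satisfies `X X' = Q'/2`, and
differentiating once more gives `X″ = (4ac - b²) / (4 X³)`, because `Q · Q″/2 - (Q'/2)²` is the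
constant `ac - b²/4`. With `a = R²`, `b = 2 v₀ R`, `c = v₀² + k/R²` this constant is `k`.
Positivity of `Q` on `[0, ∞)` comes from `Q(t) = (R + v₀ t)² + (k/R²) t²`.
-/

open Set

section SqrtQuadratic

variable {a b c t : ℝ}

theorem hasDerivAt_sqrt_quadratic (hQ : 0 < a + b * t + c * t ^ 2) :
    HasDerivAt (fun s => √(a + b * s + c * s ^ 2))
      ((b + 2 * c * t) / (2 * √(a + b * t + c * t ^ 2))) t := by
  have hQ' : HasDerivAt (fun s => a + b * s + c * s ^ 2) (b + 2 * c * t) t := by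
    refine ((((hasDerivAt_id t).const_mul b).const_add a).fun_add
      ((hasDerivAt_pow 2 t).const_mul c)).congr_deriv ?_
    push_cast
    ring
  exact hQ'.sqrt hQ.ne'

theorem hasDerivAt_deriv_sqrt_quadratic (hQ : 0 < a + b * t + c * t ^ 2) :
    HasDerivAt (fun s => (b + 2 * c * s) / (2 * √(a + b * s + c * s ^ 2)))
      ((4 * a * c - b ^ 2) / (4 * √(a + b * t + c * t ^ 2) ^ 3)) t := by
  have hnum : HasDerivAt (fun s => b + 2 * c * s) (2 * c) t := by
    simpa using ((hasDerivAt_id t).const_mul (2 * c)).const_add b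
  have hden := (hasDerivAt_sqrt_quadratic hQ).const_mul 2
  have hX : 0 < √(a + b * t + c * t ^ 2) := Real.sqrt_pos.mpr hQ
  refine (hnum.fun_div hden (by positivity)).congr_deriv ?_
  have hsq : √(a + b * t + c * t ^ 2) ^ 2 = a + b * t + c * t ^ 2 := Real.sq_sqrt hQ.le
  field_simp
  linear_combination (16 * c) * hsq

theorem contDiffAt_sqrt_quadratic (n : WithTop ℕ∞) (hQ : 0 < a + b * t + c * t ^ 2) :
    ContDiffAt ℝ n (fun s => √(a + b * s + c * s ^ 2)) t := by
  have hpoly : ContDiff ℝ n fun s : ℝ => a + b * s + c * s ^ 2 := by fun_prop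
  exact (Real.contDiffAt_sqrt hQ.ne').comp t hpoly.contDiffAt

end SqrtQuadratic

theorem derivWithin_eqOn_of_hasDerivAt {f f' : ℝ → ℝ} {s : Set ℝ} (hs : UniqueDiffOn ℝ s)
    (hf : ∀ t ∈ s, HasDerivAt f (f' t) t) : EqOn (derivWithin f s) f' s :=
  fun t ht => (hf t ht).hasDerivWithinAt.derivWithin (hs t ht)

theorem derivWithin_derivWithin_eq_of_hasDerivAt {f f' : ℝ → ℝ} {f'' : ℝ} {s : Set ℝ} {t : ℝ}
    (hs : UniqueDiffOn ℝ s) (hf : ∀ t ∈ s, HasDerivAt f (f' t) t) (ht : t ∈ s)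
    (hf' : HasDerivAt f' f'' t) : derivWithin (derivWithin f s) s t = f'' := by
  have hEq := derivWithin_eqOn_of_hasDerivAt hs hf
  rw [derivWithin_congr hEq (hEq ht)]
  exact hf'.hasDerivWithinAt.derivWithin (hs t ht)

theorem characteristic_quadratic_pos {R v₀ k t : ℝ} (hR : 0 < R) (hk : 0 ≤ k)
    (h : 0 < k ∨ 0 ≤ v₀) (ht : 0 ≤ t) :
    0 < R ^ 2 + 2 * v₀ * R * t + (v₀ ^ 2 + k / R ^ 2) * t ^ 2 := by
  rcases h with hk_pos | hv
  · rcases ht.eq_or_lt with rfl | ht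
    · simpa using pow_pos hR 2
    · have hsq : R ^ 2 + 2 * v₀ * R * t + (v₀ ^ 2 + k / R ^ 2) * t ^ 2
          = (R + v₀ * t) ^ 2 + k / R ^ 2 * t ^ 2 := by ring
      rw [hsq]
      positivity
  · positivity

/-- In four dimensions, `X(t) = √(R² + 2 v₀ R t + C t²)` with `C = v₀² + k/R²`
solves the characteristic ODE `X″ = k / X³` on `[0, ∞)` with `X(0) = R`, `X′(0) = v₀`. -/
theorem fourD_characteristic_explicit (R v₀ k : ℝ) (hR : 0 < R) (hk : 0 ≤ k)
    (h : 0 < k ∨ 0 ≤ v₀) :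
    let C : ℝ := v₀ ^ 2 + k / R ^ 2
    let X : ℝ → ℝ := fun t => Real.sqrt (R ^ 2 + 2 * v₀ * R * t + C * t ^ 2)
    (∀ t : ℝ, 0 ≤ t → 0 < R ^ 2 + 2 * v₀ * R * t + C * t ^ 2) ∧
    ContDiffOn ℝ 2 X (Set.Ici 0) ∧
    (∀ t : ℝ, 0 ≤ t →
      derivWithin (derivWithin X (Set.Ici 0)) (Set.Ici 0) t = k / X t ^ 3) ∧
    X 0 = R ∧ derivWithin X (Set.Ici 0) 0 = v₀ := by
  intro C X
  have hpos : ∀ t : ℝ, 0 ≤ t → 0 < R ^ 2 + 2 * v₀ * R * t + C * t ^ 2 :=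
    fun t ht => characteristic_quadratic_pos hR hk h ht
  have hX' : ∀ t ∈ Ici (0 : ℝ), HasDerivAt X ((2 * v₀ * R + 2 * C * t) / (2 * X t)) t :=
    fun t ht => hasDerivAt_sqrt_quadratic (hpos t ht)
  have hX0 : X 0 = R := by simpa [X] using Real.sqrt_sq hR.le
  refine ⟨hpos, fun t ht => (contDiffAt_sqrt_quadratic 2 (hpos t ht)).contDiffWithinAt,
    fun t ht => ?_, hX0, ?_⟩
  · rw [derivWithin_derivWithin_eq_of_hasDerivAt (uniqueDiffOn_Ici 0) hX' ht
      (hasDerivAt_deriv_sqrt_quadratic (hpos t ht))]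
    have hdisc : 4 * R ^ 2 * C - (2 * v₀ * R) ^ 2 = 4 * k := by
      simp only [C]
      field_simp
      ring
    rw [hdisc]
    ring
  · rw [derivWithin_eqOn_of_hasDerivAt (uniqueDiffOn_Ici 0) hX' self_mem_Ici]
    beta_reduce
    rw [hX0]
    field_simp
    ring
end

section
/- Let n ≥ 3 be an integer, k > 0, R > 0, and let X : [0,∞) → (0,∞) be twice continuously differentiable with X″(t) = k / X(t)^{n-1} for all t ≥ 0, X(0) = R and X′(0) = 0. Then X′(t) > 0 for every t > 0, X(t) → ∞ as t → ∞, and X′(t) → √(2k / ((n-2) R^{n-2})) as t → ∞. -/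
/-!
The velocity `V = X′` has derivative `k / X ^ (n - 1) > 0`, so it increases from `V 0 = 0`;
hence `X′ > 0` for `t > 0`, and `X` grows at least linearly and tends to infinity.
Multiplying the equation by `2 X′` gives the conserved energy
`X′ ^ 2 + 2k / ((n - 2) X ^ (n - 2)) = 2k / ((n - 2) R ^ (n - 2))`,
and letting `X → ∞` shows `X′ ^ 2` tends to the right-hand side.
-/

open Set Filter Topology

section HalfLine

variable {f f' : ℝ → ℝ} {a : ℝ}

lemma strictMonoOn_Ici_of_hasDerivWithinAt_pos
    (hf : ∀ t ∈ Ici a, HasDerivWithinAt f (f' t) (Ici a) t) (hf' : ∀ t ∈ Ioi a, 0 < f' t) :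
    StrictMonoOn f (Ici a) :=
  strictMonoOn_of_hasDerivWithinAt_pos (convex_Ici a)
    (fun t ht => (hf t ht).continuousWithinAt)
    (fun t ht => by
      rw [interior_Ici] at ht ⊢
      exact (hf t (mem_Ici_of_Ioi ht)).mono Ioi_subset_Ici_self)
    (fun t ht => hf' t (by rwa [interior_Ici] at ht))

lemma tendsto_atTop_of_hasDerivWithinAt_Ici_ge {c : ℝ} (hc : 0 < c)
    (hf : ∀ t ∈ Ici a, HasDerivWithinAt f (f' t) (Ici a) t) (hf' : ∀ t ∈ Ici a, c ≤ f' t) :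
    Tendsto f atTop atTop := by
  have hg : ∀ t ∈ Ici a, HasDerivWithinAt (fun t => f t - c * t) (f' t - c) (Ici a) t :=
    fun t ht => (hf t ht).fun_sub (((hasDerivAt_id' t).const_mul c).hasDerivWithinAt.congr_deriv
      (mul_one c))
  have hmono : MonotoneOn (fun t => f t - c * t) (Ici a) :=
    monotoneOn_of_hasDerivWithinAt_nonneg (convex_Ici a)
      (fun t ht => (hg t ht).continuousWithinAt)
      (fun t ht => by
        rw [interior_Ici] at ht ⊢
        exact (hg t (mem_Ici_of_Ioi ht)).mono Ioi_subset_Ici_self)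
      (fun t ht => sub_nonneg.2 (hf' t (interior_subset ht)))
  refine tendsto_atTop_mono' atTop ?_
    (tendsto_atTop_add_const_left atTop (f a - c * a) (tendsto_id.const_mul_atTop hc))
  filter_upwards [eventually_ge_atTop a] with t ht
  have := hmono self_mem_Ici ht ht
  simp only [id] at this ⊢
  linarith

end HalfLine

theorem energy_eq_of_hasDerivWithinAt {s : Set ℝ} (hs : Convex ℝ s) {X V : ℝ → ℝ} {k : ℝ}
    {p : ℕ} (hp : p ≠ 0) (hX : ∀ t ∈ s, HasDerivWithinAt X (V t) s t)
    (hV : ∀ t ∈ s, HasDerivWithinAt V (k / X t ^ (p + 1)) s t) (hX0 : ∀ t ∈ s, X t ≠ 0)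
    {t₀ t : ℝ} (ht₀ : t₀ ∈ s) (ht : t ∈ s) :
    V t ^ 2 + 2 * k / p * (X t ^ p)⁻¹ = V t₀ ^ 2 + 2 * k / p * (X t₀ ^ p)⁻¹ := by
  have hE : ∀ t ∈ s, HasDerivWithinAt (fun t => V t ^ 2 + 2 * k / p * (X t ^ p)⁻¹) 0 s t := by
    intro t ht
    have hXt := hX0 t ht
    refine (((hV t ht).fun_pow 2).add ((((hX t ht).fun_pow p).fun_inv
      (pow_ne_zero p hXt)).const_mul (2 * k / p))).congr_deriv ?_
    obtain ⟨q, rfl⟩ := Nat.exists_eq_add_one_of_ne_zero hp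
    field_simp
    push_cast
    ring
  have := hs.norm_image_sub_le_of_norm_hasDerivWithin_le hE (fun _ _ => norm_zero.le) ht₀ ht
  rwa [zero_mul, norm_le_zero_iff, sub_eq_zero] at this

theorem tendsto_sq_of_hasDerivWithinAt_of_tendsto_atTop {X V : ℝ → ℝ} {k a : ℝ} {p : ℕ}
    (hp : p ≠ 0) (hX : ∀ t ∈ Ici a, HasDerivWithinAt X (V t) (Ici a) t)
    (hV : ∀ t ∈ Ici a, HasDerivWithinAt V (k / X t ^ (p + 1)) (Ici a) t)
    (hX0 : ∀ t ∈ Ici a, X t ≠ 0) (hXtop : Tendsto X atTop atTop) :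
    Tendsto (fun t => V t ^ 2) atTop (𝓝 (V a ^ 2 + 2 * k / p * (X a ^ p)⁻¹)) := by
  have hpot := ((tendsto_pow_atTop hp).comp hXtop).inv_tendsto_atTop.const_mul (2 * k / p)
  have := (tendsto_const_nhds (x := V a ^ 2 + 2 * k / p * (X a ^ p)⁻¹)).sub hpot
  rw [mul_zero, sub_zero] at this
  refine this.congr' ((eventually_ge_atTop a).mono fun t ht => ?_)
  rw [← energy_eq_of_hasDerivWithinAt (convex_Ici a) hp hX hV hX0 self_mem_Ici ht]
  simp

lemma tendsto_of_tendsto_sq_of_nonneg {α : Type*} {l : Filter α} {f : α → ℝ} {c : ℝ}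
    (hf : Tendsto (fun x => f x ^ 2) l (𝓝 c)) (hf0 : ∀ᶠ x in l, 0 ≤ f x) :
    Tendsto f l (𝓝 √c) :=
  hf.sqrt.congr' (hf0.mono fun _ hx => Real.sqrt_sq hx)

theorem repulsive_zero_velocity_general (n : ℕ) (hn : 3 ≤ n) (k R : ℝ)
    (hk : 0 < k) (X : ℝ → ℝ)
    (hpos : ∀ t : ℝ, 0 ≤ t → 0 < X t)
    (hC2 : ContDiffOn ℝ 2 X (Set.Ici 0))
    (hode : ∀ t : ℝ, 0 ≤ t →
      derivWithin (derivWithin X (Set.Ici 0)) (Set.Ici 0) t = k / X t ^ (n - 1))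
    (hX0 : X 0 = R)
    (hX'0 : derivWithin X (Set.Ici 0) 0 = 0) :
    (∀ t : ℝ, 0 < t → 0 < derivWithin X (Set.Ici 0) t) ∧
    Filter.Tendsto X Filter.atTop Filter.atTop ∧
    Filter.Tendsto (derivWithin X (Set.Ici 0)) Filter.atTop
      (nhds (Real.sqrt (2 * k / (((n : ℝ) - 2) * R ^ (n - 2))))) := by
  set p := n - 2
  have hn1 : n - 1 = p + 1 := by omega
  have hp : ((n : ℝ) - 2) = p := by rw [Nat.cast_sub (by omega)]; norm_num
  set V := derivWithin X (Ici 0)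
  have hX : ∀ t ∈ Ici (0 : ℝ), HasDerivWithinAt X (V t) (Ici 0) t := fun t ht =>
    (hC2.differentiableOn (by norm_num) t ht).hasDerivWithinAt
  have hV : ∀ t ∈ Ici (0 : ℝ), HasDerivWithinAt V (k / X t ^ (p + 1)) (Ici 0) t := fun t ht => by
    rw [← hn1, ← hode t ht]
    exact ((hC2.derivWithin (m := 1) (uniqueDiffOn_Ici 0) (by norm_num)).differentiableOn
      one_ne_zero t ht).hasDerivWithinAt
  have hVmono : StrictMonoOn V (Ici 0) := strictMonoOn_Ici_of_hasDerivWithinAt_pos hV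
    fun t ht => div_pos hk (pow_pos (hpos t (le_of_lt ht)) _)
  have hVpos : ∀ t : ℝ, 0 < t → 0 < V t := fun t ht =>
    hX'0 ▸ hVmono self_mem_Ici (le_of_lt ht) ht
  have h01 : Ici (1 : ℝ) ⊆ Ici 0 := Ici_subset_Ici.2 zero_le_one
  have hXtop : Tendsto X atTop atTop :=
    tendsto_atTop_of_hasDerivWithinAt_Ici_ge (hVpos 1 one_pos)
      (fun t ht => (hX t (h01 ht)).mono h01)
      (fun t ht => hVmono.monotoneOn (h01 self_mem_Ici) (h01 ht) ht)
  have hVsq := tendsto_sq_of_hasDerivWithinAt_of_tendsto_atTop (by omega) hX hV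
    (fun t ht => (hpos t ht).ne') hXtop
  have hC : V 0 ^ 2 + 2 * k / p * (X 0 ^ p)⁻¹ = 2 * k / (((n : ℝ) - 2) * R ^ (n - 2)) := by
    rw [hX'0, hX0, hp]
    ring
  refine ⟨hVpos, hXtop, ?_⟩
  rw [← hC]
  exact tendsto_of_tendsto_sq_of_nonneg hVsq
    ((eventually_gt_atTop 0).mono fun t ht => (hVpos t ht).le)

/-- Repulsive characteristics with vanishing initial velocity: `X′(t) > 0` for `t > 0`,
`X(t) → ∞`, and `X′(t) → √(2k/((n-2)R^{n-2}))` as `t → ∞`. -/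
theorem repulsive_zero_velocity (n : ℕ) (hn : 3 ≤ n) (k R : ℝ)
    (hk : 0 < k) (hR : 0 < R) (X : ℝ → ℝ)
    (hpos : ∀ t : ℝ, 0 ≤ t → 0 < X t)
    (hC2 : ContDiffOn ℝ 2 X (Set.Ici 0))
    (hode : ∀ t : ℝ, 0 ≤ t →
      derivWithin (derivWithin X (Set.Ici 0)) (Set.Ici 0) t = k / X t ^ (n - 1))
    (hX0 : X 0 = R)
    (hX'0 : derivWithin X (Set.Ici 0) 0 = 0) :
    (∀ t : ℝ, 0 < t → 0 < derivWithin X (Set.Ici 0) t) ∧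
    Filter.Tendsto X Filter.atTop Filter.atTop ∧
    Filter.Tendsto (derivWithin X (Set.Ici 0)) Filter.atTop
      (nhds (Real.sqrt (2 * k / (((n : ℝ) - 2) * R ^ (n - 2))))) :=
  repulsive_zero_velocity_general n hn k R hk X hpos hC2 hode hX0 hX'0
end

section
/- Let n ≥ 3 be an integer, k > 0, R > 0, v₀ < 0, and let X : [0,∞) → (0,∞) be twice continuously differentiable with X″(t) = k / X(t)^{n-1}, X(0) = R, X′(0) = v₀. Set A = 2k/(n-2) and C = v₀² + A R^{-(n-2)}. Then there is a unique t₊ > 0 with X′(t₊) = 0; it satisfies X(t₊) = (A/C)^{1/(n-2)}, X′(t) < 0 for 0 ≤ t < t₊ and X′(t) > 0 for t > t₊, the time t₊ equals the integral ∫ from (A/C)^{1/(n-2)} to R of dy/√(C - A y^{-(n-2)}), and moreover X(2t₊) = R and X′(2t₊) = -v₀. -/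
/-!
Along a characteristic the energy `X'² + A X^{-(n-2)}` is conserved, and `X'' > 0` makes the
velocity strictly increasing. While the velocity is negative the position stays below `R`, so
`X'' ≥ k R^{-(n-1)}` and the velocity vanishes at a unique time `t₊`, where the energy identity
determines `X(t₊)`. On either side of `t₊` the position is monotone with
`|X'| = √(C - A X^{-(n-2)})`, so the substitution `y = X t` turns both the descent from `R` to
`X(t₊)` and the return to `R` into the same integral: the return happens at `2 t₊`, and by energy
conservation with velocity `-v₀`.
-/

open Set Filter intervalIntegral

theorem hasDerivAt_div_pow (A : ℝ) (m : ℕ) {y : ℝ} (hy : y ≠ 0) :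
    HasDerivAt (fun y => A / y ^ m) (-(A * m) / y ^ (m + 1)) y := by
  refine ((hasDerivAt_const y A).fun_div (hasDerivAt_pow m y) (pow_ne_zero m hy)).congr_deriv ?_
  rcases m with _ | m
  · simp
  · rw [div_eq_div_iff (pow_ne_zero _ (pow_ne_zero _ hy)) (pow_ne_zero _ hy), Nat.add_one_sub_one]
    ring

theorem sq_add_comp_eq_of_hasDerivWithinAt {X D F V : ℝ → ℝ} {a t : ℝ}
    (hX : ∀ s ∈ Ici a, HasDerivWithinAt X (D s) (Ici a) s)
    (hD : ∀ s ∈ Ici a, HasDerivWithinAt D (F s) (Ici a) s)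
    (hV : ∀ s ∈ Ici a, HasDerivAt V (-2 * F s) (X s)) (ht : a ≤ t) :
    D t ^ 2 + V (X t) = D a ^ 2 + V (X a) := by
  have hcont : ContinuousOn (fun s => D s ^ 2 + V (X s)) (Icc a t) := fun s hs =>
    (((hD s hs.1).continuousWithinAt.pow 2).add ((hV s hs.1).continuousAt.comp_continuousWithinAt
      (hX s hs.1).continuousWithinAt)).mono Icc_subset_Ici_self
  have hderiv : ∀ s ∈ Ico a t, HasDerivWithinAt (fun s => D s ^ 2 + V (X s)) 0 (Ici s) s := by
    intro s hs
    have := ((hD s hs.1).fun_pow 2).fun_add ((hV s hs.1).comp_hasDerivWithinAt s (hX s hs.1))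
    refine (this.mono (Ici_subset_Ici.mpr hs.1)).congr_deriv ?_
    ring
  exact constant_of_has_deriv_right_zero hcont hderiv t ⟨ht, le_rfl⟩

theorem tendsto_atTop_of_le_deriv {f f' : ℝ → ℝ} {a c : ℝ} (hc : 0 < c)
    (hf : ContinuousOn f (Ici a)) (hf' : ∀ x ∈ Ioi a, HasDerivAt f (f' x) x)
    (hle : ∀ x ∈ Ioi a, c ≤ f' x) : Tendsto f atTop atTop := by
  have hmono : MonotoneOn (fun x => f x - c * x) (Ici a) := by
    refine monotoneOn_of_hasDerivWithinAt_nonneg (f' := fun x => f' x - c) (convex_Ici a)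
      (hf.sub (continuousOn_const.mul continuousOn_id)) (fun x hx => ?_) (fun x hx => ?_)
    · rw [interior_Ici] at hx ⊢
      exact ((hf' x hx).fun_sub ((hasDerivAt_id x).const_mul c)).hasDerivWithinAt.congr_deriv
        (by ring)
    · rw [interior_Ici] at hx
      simpa using hle x hx
  refine tendsto_atTop_mono' atTop ?_
    (tendsto_atTop_add_const_left _ (f a - c * a) (tendsto_id.const_mul_atTop hc))
  filter_upwards [eventually_ge_atTop a] with x hx
  have := hmono self_mem_Ici hx hx
  simp only [id] at this ⊢
  linarith

/-- `X` is a characteristic of the repulsive problem, `X'' = k / X ^ (m + 1)` with `m = n - 2`,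
on `[0, ∞)`, and `D` is its (one-sided at `0`) velocity. -/
structure IsRepulsiveCharacteristic (k : ℝ) (m : ℕ) (X D : ℝ → ℝ) : Prop where
  hasDerivWithinAt : ∀ t ∈ Ici (0 : ℝ), HasDerivWithinAt X (D t) (Ici 0) t
  hasDerivWithinAt_velocity :
    ∀ t ∈ Ici (0 : ℝ), HasDerivWithinAt D (k / X t ^ (m + 1)) (Ici 0) t
  pos : ∀ t ∈ Ici (0 : ℝ), 0 < X t

theorem isRepulsiveCharacteristic_of_contDiffOn {k : ℝ} {m : ℕ} {X : ℝ → ℝ}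
    (hX : ContDiffOn ℝ 2 X (Ici 0))
    (hode : ∀ t ∈ Ici (0 : ℝ),
      derivWithin (derivWithin X (Ici 0)) (Ici 0) t = k / X t ^ (m + 1))
    (hpos : ∀ t ∈ Ici (0 : ℝ), 0 < X t) :
    IsRepulsiveCharacteristic k m X (derivWithin X (Ici 0)) := by
  have hD : ContDiffOn ℝ 1 (derivWithin X (Ici 0)) (Ici 0) :=
    hX.derivWithin (uniqueDiffOn_Ici 0) (by norm_num)
  exact ⟨fun t ht => (hX.differentiableOn (by norm_num) t ht).hasDerivWithinAt,
    fun t ht => hode t ht ▸ (hD.differentiableOn (by norm_num) t ht).hasDerivWithinAt, hpos⟩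

namespace IsRepulsiveCharacteristic

variable {k A C : ℝ} {m : ℕ} {X D : ℝ → ℝ}

theorem continuousOn (hX : IsRepulsiveCharacteristic k m X D) : ContinuousOn X (Ici 0) :=
  fun t ht => (hX.hasDerivWithinAt t ht).continuousWithinAt

theorem continuousOn_velocity (hX : IsRepulsiveCharacteristic k m X D) :
    ContinuousOn D (Ici 0) :=
  fun t ht => (hX.hasDerivWithinAt_velocity t ht).continuousWithinAt

theorem hasDerivAt (hX : IsRepulsiveCharacteristic k m X D) {t : ℝ} (ht : 0 < t) :
    HasDerivAt X (D t) t :=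
  (hX.hasDerivWithinAt t ht.le).hasDerivAt (Ici_mem_nhds ht)

theorem hasDerivAt_velocity (hX : IsRepulsiveCharacteristic k m X D) {t : ℝ} (ht : 0 < t) :
    HasDerivAt D (k / X t ^ (m + 1)) t :=
  (hX.hasDerivWithinAt_velocity t ht.le).hasDerivAt (Ici_mem_nhds ht)

theorem velocity_sq_eq (hX : IsRepulsiveCharacteristic k m X D) (hAm : A * m = 2 * k)
    (hC : C = D 0 ^ 2 + A / X 0 ^ m) {t : ℝ} (ht : 0 ≤ t) :
    D t ^ 2 = C - A / X t ^ m := by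
  have hV : ∀ s ∈ Ici (0 : ℝ), HasDerivAt (fun y => A / y ^ m) (-2 * (k / X s ^ (m + 1))) (X s) :=
    fun s hs => (hasDerivAt_div_pow A m (hX.pos s hs).ne').congr_deriv (by rw [hAm]; ring)
  have := sq_add_comp_eq_of_hasDerivWithinAt hX.hasDerivWithinAt hX.hasDerivWithinAt_velocity hV ht
  rw [hC, ← this]
  ring

theorem strictMonoOn_velocity (hX : IsRepulsiveCharacteristic k m X D) (hk : 0 < k) :
    StrictMonoOn D (Ici 0) := by
  refine strictMonoOn_of_hasDerivWithinAt_pos (f' := fun t => k / X t ^ (m + 1)) (convex_Ici 0)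
    hX.continuousOn_velocity (fun t ht => ?_) (fun t ht => ?_)
  · rw [interior_Ici] at ht ⊢
    exact (hX.hasDerivAt_velocity ht).hasDerivWithinAt
  · exact div_pos hk (pow_pos (hX.pos t (interior_subset ht)) _)

theorem antitoneOn (hX : IsRepulsiveCharacteristic k m X D) {a b : ℝ} (ha : 0 ≤ a)
    (hD : ∀ t ∈ Ioo a b, D t ≤ 0) : AntitoneOn X (Icc a b) := by
  refine antitoneOn_of_hasDerivWithinAt_nonpos (f' := D) (convex_Icc a b)
    (hX.continuousOn.mono fun t ht => ha.trans ht.1) (fun t ht => ?_) (fun t ht => ?_)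
  · rw [interior_Icc] at ht ⊢
    exact (hX.hasDerivAt (ha.trans_lt ht.1)).hasDerivWithinAt
  · rw [interior_Icc] at ht
    exact hD t ht

theorem velocity_neg_of_lt (hX : IsRepulsiveCharacteristic k m X D) (hk : 0 < k) {tp t : ℝ}
    (htp : 0 ≤ tp) (hDtp : D tp = 0) (ht : 0 ≤ t) (h : t < tp) : D t < 0 :=
  hDtp ▸ hX.strictMonoOn_velocity hk ht htp h

theorem velocity_pos_of_gt (hX : IsRepulsiveCharacteristic k m X D) (hk : 0 < k) {tp t : ℝ}
    (htp : 0 ≤ tp) (hDtp : D tp = 0) (h : tp < t) : 0 < D t :=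
  hDtp ▸ hX.strictMonoOn_velocity hk htp (htp.trans h.le) h

theorem position_eq_rpow_of_velocity_eq_zero (hX : IsRepulsiveCharacteristic k m X D)
    (hE : ∀ t ∈ Ici (0 : ℝ), D t ^ 2 = C - A / X t ^ m) (hA : A ≠ 0) (hm : m ≠ 0) {tp : ℝ}
    (htp : 0 ≤ tp) (hDtp : D tp = 0) : X tp = (A / C) ^ (m⁻¹ : ℝ) := by
  have hC := hE tp htp
  rw [hDtp, zero_pow two_ne_zero, eq_comm, sub_eq_zero] at hC
  rw [hC, div_div_cancel₀ hA, Real.pow_rpow_inv_natCast (hX.pos tp htp).le hm]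

/-- While the velocity is negative, `X ≤ X 0` bounds the acceleration below by `k / X 0 ^ (m + 1)`,
so the velocity cannot stay negative forever. -/
theorem exists_velocity_eq_zero (hX : IsRepulsiveCharacteristic k m X D) (hk : 0 < k)
    (hD0 : D 0 < 0) : ∃ tp, 0 < tp ∧ D tp = 0 := by
  by_contra! hne
  have hneg : ∀ t ∈ Ici (0 : ℝ), D t < 0 := by
    intro t ht
    by_contra! hge
    obtain ⟨s, hs, hDs⟩ := intermediate_value_Icc (mem_Ici.mp ht)
      (hX.continuousOn_velocity.mono Icc_subset_Ici_self) ⟨hD0.le, hge⟩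
    exact hne s (hs.1.lt_of_ne (by rintro rfl; exact hD0.ne hDs)) hDs
  have hle : ∀ t ∈ Ioi (0 : ℝ), X t ≤ X 0 := fun t ht =>
    hX.antitoneOn le_rfl (fun s hs => (hneg s hs.1.le).le) ⟨le_rfl, le_of_lt ht⟩
      ⟨le_of_lt ht, le_rfl⟩ (le_of_lt ht)
  have hlim : Tendsto D atTop atTop :=
    tendsto_atTop_of_le_deriv (div_pos hk (pow_pos (hX.pos 0 self_mem_Ici) (m + 1)))
      hX.continuousOn_velocity (fun t ht => hX.hasDerivAt_velocity ht) fun t ht =>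
        div_le_div_of_nonneg_left hk.le (pow_pos (hX.pos t (Ioi_subset_Ici_self ht)) _)
          (pow_le_pow_left₀ (hX.pos t (Ioi_subset_Ici_self ht)).le (hle t ht) _)
  obtain ⟨t, ht⟩ := ((hlim.eventually_ge_atTop 0).and (eventually_ge_atTop 0)).exists
  exact (hneg t ht.2).not_ge ht.1

theorem tendsto_atTop (hX : IsRepulsiveCharacteristic k m X D) (hk : 0 < k) {a : ℝ}
    (ha : 0 ≤ a) (hDa : 0 < D a) : Tendsto X atTop atTop :=
  tendsto_atTop_of_le_deriv hDa (hX.continuousOn.mono (Ici_subset_Ici.mpr ha))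
    (fun _ ht => hX.hasDerivAt (ha.trans_lt ht)) fun _ ht =>
      (hX.strictMonoOn_velocity hk).monotoneOn ha (ha.trans (le_of_lt ht)) (le_of_lt ht)

theorem exists_position_eq_initial (hX : IsRepulsiveCharacteristic k m X D) (hk : 0 < k)
    {tp : ℝ} (htp : 0 ≤ tp) (hDtp : D tp = 0) : ∃ T ∈ Ici tp, X T = X 0 :=
  intermediate_value_Ici (hX.continuousOn.mono (Ici_subset_Ici.mpr htp))
    (hX.tendsto_atTop hk (by linarith) (hX.velocity_pos_of_gt hk htp hDtp (lt_add_one tp)))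
    (hX.antitoneOn le_rfl (fun t ht => (hX.velocity_neg_of_lt hk htp hDtp ht.1.le ht.2).le)
      ⟨le_rfl, htp⟩ ⟨htp, le_rfl⟩ htp)

/-- The substitution is monotone, so no integrability is needed of the integrand, which blows up
at the turning point. -/
theorem integral_eq_of_velocity_neg (hX : IsRepulsiveCharacteristic k m X D)
    (hE : ∀ t ∈ Ici (0 : ℝ), D t ^ 2 = C - A / X t ^ m) {a b : ℝ} (ha : 0 ≤ a) (hab : a ≤ b)
    (hD : ∀ t ∈ Ioo a b, D t < 0) :
    ∫ y in X b..X a, 1 / √(C - A / y ^ m) = b - a := by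
  have key := integral_deriv_smul_comp_of_deriv_nonpos (g := fun y => 1 / √(C - A / y ^ m))
    (hX.continuousOn.mono (by rw [uIcc_of_le hab]; exact fun t ht => ha.trans ht.1))
    (by rw [min_eq_left hab, max_eq_right hab]; exact fun t ht => hX.hasDerivAt (ha.trans_lt ht.1))
    (by rw [min_eq_left hab, max_eq_right hab]; exact fun t ht => (hD t ht).le)
  rw [integral_congr_Ioo_of_le hab (g := fun _ => -1) fun t ht => ?_,
    intervalIntegral.integral_const] at key
  · rw [integral_symm, ← key]
    simp
  · have hDt := hD t ht
    simp only [smul_eq_mul, Function.comp_apply]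
    rw [← hE t (ha.trans ht.1.le), Real.sqrt_sq_eq_abs, abs_of_neg hDt, mul_one_div,
      div_neg_self hDt.ne]

theorem integral_eq_of_velocity_pos (hX : IsRepulsiveCharacteristic k m X D)
    (hE : ∀ t ∈ Ici (0 : ℝ), D t ^ 2 = C - A / X t ^ m) {a b : ℝ} (ha : 0 ≤ a) (hab : a ≤ b)
    (hD : ∀ t ∈ Ioo a b, 0 < D t) :
    ∫ y in X a..X b, 1 / √(C - A / y ^ m) = b - a := by
  have key := integral_deriv_smul_comp_of_deriv_nonneg (g := fun y => 1 / √(C - A / y ^ m))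
    (hX.continuousOn.mono (by rw [uIcc_of_le hab]; exact fun t ht => ha.trans ht.1))
    (by rw [min_eq_left hab, max_eq_right hab]; exact fun t ht => hX.hasDerivAt (ha.trans_lt ht.1))
    (by rw [min_eq_left hab, max_eq_right hab]; exact fun t ht => (hD t ht).le)
  rw [integral_congr_Ioo_of_le hab (g := fun _ => 1) fun t ht => ?_,
    intervalIntegral.integral_const] at key
  · rw [← key]
    simp
  · have hDt := hD t ht
    simp only [smul_eq_mul, Function.comp_apply]
    rw [← hE t (ha.trans ht.1.le), Real.sqrt_sq_eq_abs, abs_of_pos hDt, mul_one_div,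
      div_self hDt.ne']

end IsRepulsiveCharacteristic

theorem repulsive_negative_velocity_turning_general (n : ℕ) (hn : 3 ≤ n) (k R v₀ : ℝ)
    (hk : 0 < k) (hv : v₀ < 0) (X : ℝ → ℝ)
    (hpos : ∀ t : ℝ, 0 ≤ t → 0 < X t)
    (hC2 : ContDiffOn ℝ 2 X (Set.Ici 0))
    (hode : ∀ t : ℝ, 0 ≤ t →
      derivWithin (derivWithin X (Set.Ici 0)) (Set.Ici 0) t = k / X t ^ (n - 1))
    (hX0 : X 0 = R)
    (hX'0 : derivWithin X (Set.Ici 0) 0 = v₀)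
    (A C : ℝ) (hA : A = 2 * k / ((n : ℝ) - 2)) (hC : C = v₀ ^ 2 + A / R ^ (n - 2)) :
    ∃ tp : ℝ, 0 < tp ∧ derivWithin X (Set.Ici 0) tp = 0 ∧
      (∀ s : ℝ, 0 < s → derivWithin X (Set.Ici 0) s = 0 → s = tp) ∧
      X tp = (A / C) ^ (1 / ((n : ℝ) - 2)) ∧
      (∀ t : ℝ, 0 ≤ t → t < tp → derivWithin X (Set.Ici 0) t < 0) ∧
      (∀ t : ℝ, tp < t → 0 < derivWithin X (Set.Ici 0) t) ∧
      tp = ∫ y in ((A / C) ^ (1 / ((n : ℝ) - 2)))..R,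
        1 / Real.sqrt (C - A / y ^ (n - 2)) ∧
      X (2 * tp) = R ∧ derivWithin X (Set.Ici 0) (2 * tp) = -v₀ := by
  set D := derivWithin X (Ici 0)
  have hm : ((n - 2 : ℕ) : ℝ) = n - 2 := by rw [Nat.cast_sub (by omega)]; norm_num
  have hm0 : (0 : ℝ) < n - 2 := by rw [← hm]; exact_mod_cast (by omega : 0 < n - 2)
  have hX : IsRepulsiveCharacteristic k (n - 2) X D :=
    isRepulsiveCharacteristic_of_contDiffOn hC2
      (fun t ht => by rw [hode t ht, show n - 1 = n - 2 + 1 by omega]) hpos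
  have hE : ∀ t ∈ Ici (0 : ℝ), D t ^ 2 = C - A / X t ^ (n - 2) := fun t ht =>
    hX.velocity_sq_eq (by rw [hA, hm, div_mul_cancel₀ _ hm0.ne']) (by rw [hC, hX0, hX'0]) ht
  obtain ⟨tp, htp, hDtp⟩ := hX.exists_velocity_eq_zero hk (hX'0 ▸ hv)
  have hpos' : ∀ t, tp < t → 0 < D t := fun t => hX.velocity_pos_of_gt hk htp.le hDtp
  have hXtp : X tp = (A / C) ^ (1 / ((n : ℝ) - 2)) := by
    rw [one_div, ← hm]
    exact hX.position_eq_rpow_of_velocity_eq_zero hE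
      (by rw [hA]; exact (div_pos (by linarith) hm0).ne') (by omega) htp.le hDtp
  have hdown := hX.integral_eq_of_velocity_neg hE le_rfl htp.le
    fun t ht => hX.velocity_neg_of_lt hk htp.le hDtp ht.1.le ht.2
  obtain ⟨T, hT, hXT⟩ := hX.exists_position_eq_initial hk htp.le hDtp
  have hup := hX.integral_eq_of_velocity_pos hE htp.le hT fun t ht => hpos' t ht.1
  have hT2 : T = 2 * tp := by rw [hXT] at hup; linarith
  refine ⟨tp, htp, hDtp, fun s hs hDs => (hX.strictMonoOn_velocity hk).injOn hs.le htp.le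
    (hDs.trans hDtp.symm), hXtp, fun t => hX.velocity_neg_of_lt hk htp.le hDtp, hpos',
    by rw [← hXtp, ← hX0, hdown, sub_zero], by rw [← hT2, hXT, hX0], ?_⟩
  have hsq : D (2 * tp) ^ 2 = v₀ ^ 2 := by
    rw [hE _ (mem_Ici.mpr (by positivity)), ← hT2, hXT, hX0, hC]; ring
  exact (sq_eq_sq_iff_eq_or_eq_neg.mp hsq).resolve_left fun h => by
    linarith [hpos' (2 * tp) (by linarith)]

/-- Turning point of a repulsive characteristic with negative initial velocity:
there is a unique `t₊ > 0` with `X′(t₊) = 0`; it satisfies `X(t₊) = (A/C)^{1/(n-2)}`,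
`X′ < 0` before and `X′ > 0` after, `t₊ = ∫_{(A/C)^{1/(n-2)}}^R dy/√(C - A y^{-(n-2)})`,
and `X(2t₊) = R`, `X′(2t₊) = -v₀`. -/
theorem repulsive_negative_velocity_turning (n : ℕ) (hn : 3 ≤ n) (k R v₀ : ℝ)
    (hk : 0 < k) (hR : 0 < R) (hv : v₀ < 0) (X : ℝ → ℝ)
    (hpos : ∀ t : ℝ, 0 ≤ t → 0 < X t)
    (hC2 : ContDiffOn ℝ 2 X (Set.Ici 0))
    (hode : ∀ t : ℝ, 0 ≤ t →
      derivWithin (derivWithin X (Set.Ici 0)) (Set.Ici 0) t = k / X t ^ (n - 1))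
    (hX0 : X 0 = R)
    (hX'0 : derivWithin X (Set.Ici 0) 0 = v₀)
    (A C : ℝ) (hA : A = 2 * k / ((n : ℝ) - 2)) (hC : C = v₀ ^ 2 + A / R ^ (n - 2)) :
    ∃ tp : ℝ, 0 < tp ∧ derivWithin X (Set.Ici 0) tp = 0 ∧
      (∀ s : ℝ, 0 < s → derivWithin X (Set.Ici 0) s = 0 → s = tp) ∧
      X tp = (A / C) ^ (1 / ((n : ℝ) - 2)) ∧
      (∀ t : ℝ, 0 ≤ t → t < tp → derivWithin X (Set.Ici 0) t < 0) ∧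
      (∀ t : ℝ, tp < t → 0 < derivWithin X (Set.Ici 0) t) ∧
      tp = ∫ y in ((A / C) ^ (1 / ((n : ℝ) - 2)))..R,
        1 / Real.sqrt (C - A / y ^ (n - 2)) ∧
      X (2 * tp) = R ∧ derivWithin X (Set.Ici 0) (2 * tp) = -v₀ :=
  repulsive_negative_velocity_turning_general n hn k R v₀ hk hv X hpos hC2 hode hX0 hX'0 A C hA hC
end

section
/- For an integer n ≥ 4 let I_n = ∫ from 1 to ∞ of ((1 - y^{-2})^{-1/(n-2)} - 1) dy. Then each I_n is a convergent improper integral, I_m < I_l whenever m > l ≥ 4, and I_n < 1 for every n ≥ 5. -/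
open MeasureTheory

/-- `I n = ∫₁^∞ ((1 - y⁻²)^{-1/(n-2)} - 1) dy`. -/
noncomputable def I (n : ℕ) : ℝ :=
  ∫ y in Set.Ioi (1 : ℝ), ((1 - y ^ (-2 : ℝ)) ^ (-(1 : ℝ) / ((n : ℝ) - 2)) - 1)

/-!
For `y > 1` the base `1 - y⁻²` lies in `(0, 1)`, so `(1 - y⁻²)^p - 1` is nonnegative for `p ≤ 0`
and strictly decreasing in `p`. At `p = -1/2`, i.e. `n = 4`, it equals `y / √(y² - 1) - 1`, the
derivative of `√(y² - 1) - y`, which increases from `-1` at `y = 1` to `0` at infinity; hence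
`I 4 = 1`. For `-1/2 ≤ p ≤ 0` the integrand is dominated by the one at `p = -1/2`, which gives
integrability, and the strict pointwise monotonicity in `p` passes to the integrals.
-/

open Set Filter Topology

namespace I

noncomputable def integrand (p y : ℝ) : ℝ := (1 - y ^ (-2 : ℝ)) ^ p - 1

theorem one_sub_rpow_neg_two_mem_Ioo {y : ℝ} (hy : 1 < y) : 1 - y ^ (-2 : ℝ) ∈ Ioo 0 1 := by
  have hpos : 0 < y ^ (-2 : ℝ) := Real.rpow_pos_of_pos (by linarith) _
  have hlt : y ^ (-2 : ℝ) < 1 := Real.rpow_lt_one_of_one_lt_of_neg hy (by norm_num)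
  constructor <;> linarith

theorem integrand_nonneg {p y : ℝ} (hp : p ≤ 0) (hy : 1 < y) : 0 ≤ integrand p y := by
  obtain ⟨h0, h1⟩ := one_sub_rpow_neg_two_mem_Ioo hy
  exact sub_nonneg.2 (Real.one_le_rpow_of_pos_of_le_one_of_nonpos h0 h1.le hp)

theorem strictAnti_integrand {y : ℝ} (hy : 1 < y) : StrictAnti (integrand · y) := by
  obtain ⟨h0, h1⟩ := one_sub_rpow_neg_two_mem_Ioo hy
  exact fun p q hpq => sub_lt_sub_right (Real.rpow_lt_rpow_of_exponent_gt h0 h1 hpq) 1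

theorem continuousOn_integrand (p : ℝ) : ContinuousOn (integrand p) (Ioi 1) := by
  intro y hy
  have hy0 : y ≠ 0 := by simp only [mem_Ioi] at hy; positivity
  have hbase := (one_sub_rpow_neg_two_mem_Ioo hy).1.ne'
  unfold integrand
  fun_prop (disch := first | exact Or.inl hbase | exact Or.inl hy0)

theorem integrand_neg_half {y : ℝ} (hy : 1 < y) : integrand (-1 / 2) y = y / √(y ^ 2 - 1) - 1 := by
  have hy0 : 0 < y := by linarith
  have hbase : 1 - y ^ (-2 : ℝ) = (y ^ 2 - 1) / y ^ 2 := by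
    rw [Real.rpow_neg hy0.le, Real.rpow_two]; field_simp
  have hsq : 0 ≤ (y ^ 2 - 1) / y ^ 2 := hbase ▸ (one_sub_rpow_neg_two_mem_Ioo hy).1.le
  rw [integrand, hbase, show (-1 / 2 : ℝ) = -(1 / 2) by norm_num, Real.rpow_neg hsq,
    ← Real.sqrt_eq_rpow, Real.sqrt_div' _ (sq_nonneg y), Real.sqrt_sq hy0.le, inv_div]

theorem hasDerivAt_sqrt_sq_sub_one_sub {y : ℝ} (hy : 1 < y) :
    HasDerivAt (fun x => √(x ^ 2 - 1) - x) (integrand (-1 / 2) y) y := by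
  have hne : y ^ 2 - 1 ≠ 0 := by nlinarith
  have h : HasDerivAt (fun x => √(x ^ 2 - 1) - x) (2 * y / (2 * √(y ^ 2 - 1)) - 1) y := by
    simpa using (((hasDerivAt_pow 2 y).sub_const 1).sqrt hne).fun_sub (hasDerivAt_id' y)
  rwa [integrand_neg_half hy, ← mul_div_mul_left y _ two_ne_zero]

theorem tendsto_sqrt_sq_sub_one_sub_atTop :
    Tendsto (fun x : ℝ => √(x ^ 2 - 1) - x) atTop (𝓝 0) := by
  have hsum : Tendsto (fun x : ℝ => √(x ^ 2 - 1) + x) atTop atTop :=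
    tendsto_atTop_mono (fun x => le_add_of_nonneg_left (Real.sqrt_nonneg _)) tendsto_id
  have hrationalize : ∀ᶠ x : ℝ in atTop, -(√(x ^ 2 - 1) + x)⁻¹ = √(x ^ 2 - 1) - x := by
    filter_upwards [eventually_ge_atTop 1] with x hx
    have hs : √(x ^ 2 - 1) ^ 2 = x ^ 2 - 1 := Real.sq_sqrt (by nlinarith)
    have hpos : 0 < √(x ^ 2 - 1) + x := by positivity
    field_simp
    nlinarith
  simpa using (hsum.inv_tendsto_atTop.neg).congr' hrationalize

theorem integrableOn_integrand_neg_half : IntegrableOn (integrand (-1 / 2)) (Ioi 1) :=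
  integrableOn_Ioi_deriv_of_nonneg (by fun_prop) (fun _ hy => hasDerivAt_sqrt_sq_sub_one_sub hy)
    (fun _ hy => integrand_nonneg (by norm_num) hy) tendsto_sqrt_sq_sub_one_sub_atTop

theorem integral_integrand_neg_half : ∫ y in Ioi 1, integrand (-1 / 2) y = 1 := by
  rw [integral_Ioi_of_hasDerivAt_of_nonneg (by fun_prop)
    (fun _ hy => hasDerivAt_sqrt_sq_sub_one_sub hy) (fun _ hy => integrand_nonneg (by norm_num) hy)
    tendsto_sqrt_sq_sub_one_sub_atTop]
  norm_num

theorem integrableOn_integrand {p : ℝ} (hp : p ∈ Icc (-1 / 2) 0) :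
    IntegrableOn (integrand p) (Ioi 1) := by
  refine integrableOn_integrand_neg_half.mono'
    ((continuousOn_integrand p).aestronglyMeasurable measurableSet_Ioi) ?_
  refine (ae_restrict_iff' measurableSet_Ioi).2 (ae_of_all _ fun y hy => ?_)
  rw [Real.norm_of_nonneg (integrand_nonneg hp.2 hy)]
  exact (strictAnti_integrand hy).antitone hp.1

theorem strictAntiOn_integral_integrand :
    StrictAntiOn (fun p => ∫ y in Ioi 1, integrand p y) (Icc (-1 / 2) 0) := by
  intro p hp q hq hpq
  have hp_int := integrableOn_integrand hp
  have hq_int := integrableOn_integrand hq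
  have hgap : ∀ y ∈ Ioi (1 : ℝ), 0 < integrand p y - integrand q y :=
    fun y hy => sub_pos.2 (strictAnti_integrand hy hpq)
  have hsupport : Function.support (fun y => integrand p y - integrand q y) ∩ Ioi 1 = Ioi 1 :=
    inter_eq_right.2 fun y hy => (hgap y hy).ne'
  have hpos : 0 < ∫ y in Ioi 1, (integrand p y - integrand q y) := by
    rw [setIntegral_pos_iff_support_of_nonneg_ae
      ((ae_restrict_iff' measurableSet_Ioi).2 (ae_of_all _ fun y hy => (hgap y hy).le))
      (hp_int.sub hq_int), hsupport, Real.volume_Ioi]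
    exact ENNReal.zero_lt_top
  rwa [integral_sub hp_int hq_int, sub_pos] at hpos

theorem neg_one_div_sub_two_mem_Icc {n : ℕ} (hn : 4 ≤ n) : -1 / ((n : ℝ) - 2) ∈ Icc (-1 / 2) 0 := by
  have hn' : (4 : ℝ) ≤ n := by exact_mod_cast hn
  refine ⟨?_, div_nonpos_of_nonpos_of_nonneg (by norm_num) (by linarith)⟩
  rw [div_le_div_iff₀ (by norm_num) (by linarith)]
  linarith

theorem neg_one_div_sub_two_lt {l m : ℕ} (hl : 2 < l) (hlm : l < m) :
    -1 / ((l : ℝ) - 2) < -1 / ((m : ℝ) - 2) := by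
  have hl' : (2 : ℝ) < l := by exact_mod_cast hl
  have hlm' : (l : ℝ) < m := by exact_mod_cast hlm
  rw [div_lt_div_iff₀ (by linarith) (by linarith)]
  linarith

theorem eq_integral_integrand (n : ℕ) : I n = ∫ y in Ioi 1, integrand (-1 / ((n : ℝ) - 2)) y :=
  rfl

theorem four_eq_one : I 4 = 1 := by
  rw [eq_integral_integrand, show -1 / (((4 : ℕ) : ℝ) - 2) = -1 / 2 by norm_num,
    integral_integrand_neg_half]

end I

/-- For `n ≥ 4` the integral `I n` converges, `I` is strictly decreasing on `n ≥ 4`,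
and `I n < 1` for `n ≥ 5`. -/
theorem I_integrable_strictAnti_lt_one :
    (∀ n : ℕ, 4 ≤ n →
      IntegrableOn (fun y : ℝ => (1 - y ^ (-2 : ℝ)) ^ (-(1 : ℝ) / ((n : ℝ) - 2)) - 1)
        (Set.Ioi 1)) ∧
    (∀ m l : ℕ, 4 ≤ l → l < m → I m < I l) ∧
    (∀ n : ℕ, 5 ≤ n → I n < 1) := by
  have hanti : ∀ m l : ℕ, 4 ≤ l → l < m → I m < I l := fun m l hl hlm =>
    I.strictAntiOn_integral_integrand (I.neg_one_div_sub_two_mem_Icc hl)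
      (I.neg_one_div_sub_two_mem_Icc (hl.trans hlm.le)) (I.neg_one_div_sub_two_lt (by omega) hlm)
  refine ⟨fun n hn => I.integrableOn_integrand (I.neg_one_div_sub_two_mem_Icc hn), hanti,
    fun n hn => ?_⟩
  calc I n < I 4 := hanti n 4 le_rfl hn
    _ = 1 := I.four_eq_one
end

section
/- Let n ≥ 3 be an integer and s > 1. Then ∫ from 1 to s of dz/√(1 - z^{-(n-2)}) = (s-1)/√(1 - s^{-(n-2)}) + ∫ from (1 - s^{-(n-2)})^{-1/2} to ∞ of ((1 - y^{-2})^{-1/(n-2)} - 1) dy. -/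
/-!
If `g` maps `(a, ∞)` differentiably into the domain of a left inverse `φ` and blows up at `a⁺`,
then `∫ₐᵇ g` splits into the rectangle `(b - a) g(b)` plus the area `∫_{g b}^∞ (φ - a)` read off
along the inverse. Indeed `F(u) = ∫ᵤᵇ g + (u - a) g(u) - ∫_{g b}^{g u} (φ - a)` has derivative
`-g u + g u + (u - a) g'(u) - (φ (g u) - a) g'(u) = 0`, so `F` is constant on `(a, b]`, and letting
`u → a⁺` gives the identity provided `(u - a) g(u) → 0`. For `g(z) = (1 - z^{-m})^{-1/2}` the
inverse is `φ(y) = (1 - y^{-2})^{-1/m}`; the needed integrability comes from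
`g(z) ≤ √z / √(z - 1)` and `φ(y) - 1 = O(y^{-2})`.
-/

open Set MeasureTheory Filter Topology intervalIntegral

section InverseFunction

variable {a b c : ℝ} {g φ : ℝ → ℝ}

theorem hasDerivAt_integral_add_sub_mul_sub_integral_inverse
    (hg : DifferentiableOn ℝ g (Ioi a)) (hgc : MapsTo g (Ioi a) (Ioi c))
    (hφ : ContinuousOn φ (Ioi c)) (hφg : ∀ z ∈ Ioi a, φ (g z) = z) (hab : a < b)
    {x : ℝ} (hx : a < x) :
    HasDerivAt (fun u => (∫ z in u..b, g z) + (u - a) * g u - ∫ y in g b..g u, (φ y - a)) 0 x := by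
  have hgx : HasDerivAt g (deriv g x) x := (hg.differentiableAt (Ioi_mem_nhds hx)).hasDerivAt
  have hgcont : ContinuousOn g (Ioi a) := hg.continuousOn
  have hφ_sub : ContinuousOn (fun y => φ y - a) (Ioi c) := hφ.sub continuousOn_const
  have hleft : HasDerivAt (fun u => ∫ z in u..b, g z) (-g x) x :=
    integral_hasDerivAt_left
      (hgcont.mono (ordConnected_Ioi.uIcc_subset hx hab)).intervalIntegrable
      (hgcont.stronglyMeasurableAtFilter isOpen_Ioi x hx)
      (hgcont.continuousAt (Ioi_mem_nhds hx))
  have hright : HasDerivAt (fun t => ∫ y in g b..t, (φ y - a)) (φ (g x) - a) (g x) :=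
    integral_hasDerivAt_right
      (hφ_sub.mono (ordConnected_Ioi.uIcc_subset (hgc hab) (hgc hx))).intervalIntegrable
      (hφ_sub.stronglyMeasurableAtFilter isOpen_Ioi _ (hgc hx))
      (hφ_sub.continuousAt (Ioi_mem_nhds (hgc hx)))
  refine ((hleft.add (((hasDerivAt_id x).sub_const a).mul hgx)).sub
    (hright.comp x hgx)).congr_deriv ?_
  rw [hφg x hx, id]
  ring

theorem intervalIntegral_eq_sub_mul_add_integral_Ioi_inverse
    (hg : DifferentiableOn ℝ g (Ioi a)) (hgc : MapsTo g (Ioi a) (Ioi c))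
    (hφ : ContinuousOn φ (Ioi c)) (hφg : ∀ z ∈ Ioi a, φ (g z) = z) (hab : a < b)
    (hg_int : IntervalIntegrable g volume a b)
    (hφ_int : IntegrableOn (fun y => φ y - a) (Ioi (g b)))
    (hg_top : Tendsto g (𝓝[>] a) atTop)
    (hg_zero : Tendsto (fun z => (z - a) * g z) (𝓝[>] a) (𝓝 0)) :
    ∫ z in a..b, g z = (b - a) * g b + ∫ y in Ioi (g b), (φ y - a) := by
  set F := fun u => (∫ z in u..b, g z) + (u - a) * g u - ∫ y in g b..g u, (φ y - a)
  have hF' : ∀ x ∈ Ioi a, HasDerivAt F 0 x := fun x hx =>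
    hasDerivAt_integral_add_sub_mul_sub_integral_inverse hg hgc hφ hφg hab hx
  have hF_const : ∀ u ∈ Ioi a, F u = F b := fun u hu =>
    isOpen_Ioi.is_const_of_deriv_eq_zero isPreconnected_Ioi
      (fun x hx => (hF' x hx).differentiableAt.differentiableWithinAt)
      (fun x hx => (hF' x hx).deriv) hu hab
  have hFb : F b = (b - a) * g b := by simp [F]
  have h_left : Tendsto (fun u => ∫ z in u..b, g z) (𝓝[>] a) (𝓝 (∫ z in a..b, g z)) :=
    ((continuousOn_primitive_interval_left ((intervalIntegrable_iff' (f := g)).1 hg_int)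
      ).continuousWithinAt left_mem_uIcc).mono_left
        (nhdsWithin_le_of_mem (mem_of_superset (Icc_mem_nhdsGT hab) Icc_subset_uIcc))
  have hF_lim : Tendsto F (𝓝[>] a)
      (𝓝 ((∫ z in a..b, g z) + 0 - ∫ y in Ioi (g b), (φ y - a))) :=
    (h_left.add hg_zero).sub (intervalIntegral_tendsto_integral_Ioi _ hφ_int hg_top)
  have hF_eventually : F =ᶠ[𝓝[>] a] fun _ => (b - a) * g b :=
    eventually_nhdsWithin_of_forall fun u hu => (hF_const u hu).trans hFb
  have := tendsto_nhds_unique (hF_lim.congr' hF_eventually) tendsto_const_nhds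
  linarith

end InverseFunction

theorem one_div_sqrt_eq_rpow {x : ℝ} (hx : 0 ≤ x) : 1 / √x = x ^ (-(1 : ℝ) / 2) := by
  rw [neg_div, Real.rpow_neg hx, ← Real.sqrt_eq_rpow, one_div]

namespace IntegralInversion

noncomputable def invSqrtMap (m : ℕ) (z : ℝ) : ℝ := 1 / √(1 - (z ^ m)⁻¹)

noncomputable def invSqrtMapInv (m : ℕ) (y : ℝ) : ℝ := (1 - y ^ (-2 : ℝ)) ^ (-(1 : ℝ) / m)

variable {m : ℕ} {z : ℝ}

theorem one_sub_inv_pow_pos (hm : m ≠ 0) (hz : 1 < z) : 0 < 1 - (z ^ m)⁻¹ :=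
  sub_pos.2 (inv_lt_one_of_one_lt₀ (one_lt_pow₀ hz hm))

theorem one_sub_inv_pow_lt_one (hz : 0 < z) : 1 - (z ^ m)⁻¹ < 1 :=
  sub_lt_self _ (inv_pos.2 (pow_pos hz m))

theorem invSqrtMap_eq_rpow (hm : m ≠ 0) (hz : 1 < z) :
    invSqrtMap m z = (1 - (z ^ m)⁻¹) ^ (-(1 : ℝ) / 2) :=
  one_div_sqrt_eq_rpow (one_sub_inv_pow_pos hm hz).le

theorem one_lt_invSqrtMap (hm : m ≠ 0) (hz : 1 < z) : 1 < invSqrtMap m z := by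
  rw [invSqrtMap_eq_rpow hm hz]
  exact Real.one_lt_rpow_of_pos_of_lt_one_of_neg (one_sub_inv_pow_pos hm hz)
    (one_sub_inv_pow_lt_one (zero_lt_one.trans hz)) (by norm_num)

theorem invSqrtMapInv_invSqrtMap (hm : m ≠ 0) (hz : 1 < z) :
    invSqrtMapInv m (invSqrtMap m z) = z := by
  have hz0 : 0 < z := zero_lt_one.trans hz
  rw [invSqrtMapInv, invSqrtMap_eq_rpow hm hz, ← Real.rpow_mul (one_sub_inv_pow_pos hm hz).le,
    show -(1 : ℝ) / 2 * -2 = 1 by norm_num, Real.rpow_one, sub_sub_cancel, ← Real.rpow_natCast,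
    ← Real.rpow_neg hz0.le, ← Real.rpow_mul hz0.le, show -(m : ℝ) * (-1 / m) = 1 by field_simp,
    Real.rpow_one]

theorem differentiableOn_invSqrtMap (hm : m ≠ 0) :
    DifferentiableOn ℝ (invSqrtMap m) (Ioi 1) := by
  intro z hz
  have hz0 : z ≠ 0 := (zero_lt_one.trans hz).ne'
  have := one_sub_inv_pow_pos hm hz
  unfold invSqrtMap
  fun_prop (disch := positivity)

theorem continuousOn_invSqrtMapInv : ContinuousOn (invSqrtMapInv m) (Ioi 1) := by
  intro y hy
  have hy0 : y ≠ 0 := (zero_lt_one.trans hy).ne'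
  have hbase : 1 - y ^ (-2 : ℝ) ≠ 0 :=
    (sub_pos.2 (Real.rpow_lt_one_of_one_lt_of_neg hy (by norm_num))).ne'
  unfold invSqrtMapInv
  fun_prop (disch := exact Or.inl ‹_›)

theorem invSqrtMap_le_sqrt_div_sqrt (hm : m ≠ 0) (hz : 1 < z) :
    invSqrtMap m z ≤ √z / √(z - 1) := by
  have hz0 : 0 < z := zero_lt_one.trans hz
  have hlow : (z - 1) / z ≤ 1 - (z ^ m)⁻¹ := by
    have : (z ^ m)⁻¹ ≤ z⁻¹ := inv_anti₀ hz0 (le_self_pow₀ hz.le hm)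
    rw [sub_div, div_self hz0.ne', one_div]
    linarith
  calc invSqrtMap m z ≤ 1 / √((z - 1) / z) :=
        one_div_le_one_div_of_le (Real.sqrt_pos.2 (div_pos (sub_pos.2 hz) hz0))
          (Real.sqrt_le_sqrt hlow)
    _ = √z / √(z - 1) := by rw [Real.sqrt_div' _ hz0.le, one_div_div]

theorem intervalIntegrable_invSqrtMap (hm : m ≠ 0) {s : ℝ} (hs : 1 < s) :
    IntervalIntegrable (invSqrtMap m) volume 1 s := by
  have hbound : IntervalIntegrable (fun z => √s * (z - 1) ^ (-(1 : ℝ) / 2)) volume 1 s := by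
    have := (intervalIntegrable_rpow' (a := 0) (b := s - 1) (r := -(1 : ℝ) / 2)
      (by norm_num)).comp_sub_right 1
    simp only [zero_add, sub_add_cancel] at this
    exact this.const_mul _
  refine hbound.mono_fun' ?_ ?_
  · rw [uIoc_of_le hs.le]
    exact ((differentiableOn_invSqrtMap hm).continuousOn.mono
      Ioc_subset_Ioi_self).aestronglyMeasurable measurableSet_Ioc
  · rw [uIoc_of_le hs.le]
    refine (ae_restrict_iff' measurableSet_Ioc).2 (Eventually.of_forall fun z hz => ?_)
    dsimp only
    rw [Real.norm_of_nonneg (zero_lt_one.trans (one_lt_invSqrtMap hm hz.1)).le,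
      ← one_div_sqrt_eq_rpow (sub_nonneg.2 hz.1.le), mul_one_div]
    exact (invSqrtMap_le_sqrt_div_sqrt hm hz.1).trans
      (div_le_div_of_nonneg_right (Real.sqrt_le_sqrt hz.2) (Real.sqrt_nonneg _))

theorem tendsto_invSqrtMap_atTop (hm : m ≠ 0) : Tendsto (invSqrtMap m) (𝓝[>] 1) atTop := by
  have hw : Tendsto (fun z : ℝ => √(1 - (z ^ m)⁻¹)) (𝓝[>] 1) (𝓝[>] 0) := by
    refine tendsto_nhdsWithin_iff.2 ⟨?_, eventually_nhdsWithin_of_forall fun z hz =>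
      Real.sqrt_pos.2 (one_sub_inv_pow_pos hm hz)⟩
    have : ContinuousAt (fun z : ℝ => √(1 - (z ^ m)⁻¹)) 1 := by fun_prop (disch := norm_num)
    simpa using this.tendsto.mono_left nhdsWithin_le_nhds
  exact (tendsto_inv_nhdsGT_zero.comp hw).congr fun z => (one_div _).symm

theorem tendsto_sub_one_mul_invSqrtMap (hm : m ≠ 0) :
    Tendsto (fun z => (z - 1) * invSqrtMap m z) (𝓝[>] 1) (𝓝 0) := by
  have hupper : Tendsto (fun z : ℝ => √z * √(z - 1)) (𝓝[>] 1) (𝓝 0) := by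
    have : ContinuousAt (fun z : ℝ => √z * √(z - 1)) 1 := by fun_prop
    simpa using this.tendsto.mono_left nhdsWithin_le_nhds
  refine squeeze_zero' (eventually_nhdsWithin_of_forall fun z hz => ?_)
    (eventually_nhdsWithin_of_forall fun z hz => ?_) hupper
  · exact mul_nonneg (sub_nonneg.2 (le_of_lt hz))
      (zero_lt_one.trans (one_lt_invSqrtMap hm hz)).le
  · calc (z - 1) * invSqrtMap m z ≤ (z - 1) * (√z / √(z - 1)) :=
          mul_le_mul_of_nonneg_left (invSqrtMap_le_sqrt_div_sqrt hm hz)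
            (sub_nonneg.2 (le_of_lt hz))
      _ = √z * √(z - 1) := by rw [mul_div_left_comm, Real.div_sqrt]

theorem one_le_invSqrtMapInv {y : ℝ} (hy : 1 < y) : 1 ≤ invSqrtMapInv m y := by
  have hq : y ^ (-2 : ℝ) < 1 := Real.rpow_lt_one_of_one_lt_of_neg hy (by norm_num)
  have hq0 : 0 < y ^ (-2 : ℝ) := Real.rpow_pos_of_pos (zero_lt_one.trans hy) _
  exact Real.one_le_rpow_of_pos_of_le_one_of_nonpos (by linarith) (by linarith)
    (div_nonpos_of_nonpos_of_nonneg (by norm_num) m.cast_nonneg)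

theorem invSqrtMapInv_sub_one_le (hm : m ≠ 0) {Y y : ℝ} (hY : 1 < Y) (hy : Y ≤ y) :
    invSqrtMapInv m y - 1 ≤ (1 - Y ^ (-2 : ℝ))⁻¹ * y ^ (-2 : ℝ) := by
  set q := y ^ (-2 : ℝ)
  set Q := Y ^ (-2 : ℝ)
  have hq0 : 0 < q := Real.rpow_pos_of_pos (zero_lt_one.trans (hY.trans_le hy)) _
  have hqQ : q ≤ Q := Real.rpow_le_rpow_of_nonpos (zero_lt_one.trans hY) hy (by norm_num)
  have hQ : Q < 1 := Real.rpow_lt_one_of_one_lt_of_neg hY (by norm_num)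
  have hexp : (-1 : ℝ) ≤ -1 / m := by
    rw [neg_div, neg_le_neg_iff]
    exact div_le_one_of_le₀ (Nat.one_le_cast.2 (Nat.one_le_iff_ne_zero.2 hm)) m.cast_nonneg
  calc invSqrtMapInv m y - 1 ≤ (1 - q) ^ (-1 : ℝ) - 1 := by
        gcongr
        exact Real.rpow_le_rpow_of_exponent_ge (by linarith) (by linarith) hexp
    _ = q / (1 - q) := by
        have : 1 - q ≠ 0 := by linarith
        rw [Real.rpow_neg_one]
        field_simp
        ring
    _ ≤ q / (1 - Q) := by gcongr
    _ = (1 - Q)⁻¹ * q := by ring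

theorem integrableOn_Ioi_invSqrtMapInv_sub_one (hm : m ≠ 0) {Y : ℝ} (hY : 1 < Y) :
    IntegrableOn (fun y => invSqrtMapInv m y - 1) (Ioi Y) := by
  have hbound : IntegrableOn (fun y : ℝ => (1 - Y ^ (-2 : ℝ))⁻¹ * y ^ (-2 : ℝ)) (Ioi Y) :=
    (integrableOn_Ioi_rpow_of_lt (by norm_num) (zero_lt_one.trans hY)).const_mul _
  refine hbound.mono' ((continuousOn_invSqrtMapInv.sub continuousOn_const).mono
    (Ioi_subset_Ioi hY.le) |>.aestronglyMeasurable measurableSet_Ioi) ?_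
  refine (ae_restrict_iff' measurableSet_Ioi).2 (Eventually.of_forall fun y hy => ?_)
  rw [Real.norm_of_nonneg (sub_nonneg.2 (one_le_invSqrtMapInv (hY.trans hy)))]
  exact invSqrtMapInv_sub_one_le hm hY (le_of_lt hy)

theorem integral_invSqrtMap (hm : m ≠ 0) {s : ℝ} (hs : 1 < s) :
    ∫ z in (1 : ℝ)..s, invSqrtMap m z
      = (s - 1) * invSqrtMap m s + ∫ y in Ioi (invSqrtMap m s), (invSqrtMapInv m y - 1) :=
  intervalIntegral_eq_sub_mul_add_integral_Ioi_inverse (differentiableOn_invSqrtMap hm)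
    (fun _ hz => one_lt_invSqrtMap hm hz) continuousOn_invSqrtMapInv
    (fun _ hz => invSqrtMapInv_invSqrtMap hm hz) hs (intervalIntegrable_invSqrtMap hm hs)
    (integrableOn_Ioi_invSqrtMapInv_sub_one hm (one_lt_invSqrtMap hm hs))
    (tendsto_invSqrtMap_atTop hm) (tendsto_sub_one_mul_invSqrtMap hm)

end IntegralInversion

/-- Integral identity obtained by inverting `z ↦ (1 - z^{-(n-2)})^{-1/2}`:
`∫₁^s dz/√(1 - z^{-(n-2)}) = (s-1)/√(1 - s^{-(n-2)})
  + ∫_{(1 - s^{-(n-2)})^{-1/2}}^∞ ((1 - y⁻²)^{-1/(n-2)} - 1) dy`. -/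
theorem integral_inversion_identity (n : ℕ) (hn : 3 ≤ n) (s : ℝ) (hs : 1 < s) :
    (∫ z in (1 : ℝ)..s, 1 / Real.sqrt (1 - (z ^ (n - 2))⁻¹))
      = (s - 1) / Real.sqrt (1 - (s ^ (n - 2))⁻¹)
        + ∫ y in Set.Ioi ((1 - (s ^ (n - 2))⁻¹ : ℝ) ^ (-(1 : ℝ) / 2)),
            ((1 - y ^ (-2 : ℝ)) ^ (-(1 : ℝ) / ((n : ℝ) - 2)) - 1) := by
  have hm : n - 2 ≠ 0 := by omega
  have hcast : ((n - 2 : ℕ) : ℝ) = (n : ℝ) - 2 := by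
    rw [Nat.cast_sub (by omega : 2 ≤ n)]
    norm_num
  have h := IntegralInversion.integral_invSqrtMap hm hs
  rw [← hcast, ← IntegralInversion.invSqrtMap_eq_rpow hm hs, div_eq_mul_one_div]
  exact h
end

section
/- Let n ≥ 3 be an integer, a > 0 and S > 1. Then lim as v → 0⁺ of v · ∫ from 1 to S of z^{-(n-2)} / (v² + a(1 - z^{-(n-2)}))^{3/2} dz = 2/(a(n-2)). -/
open Filter Set MeasureTheory intervalIntegral Topology

/-!
For a `C¹` function `φ` vanishing at `b` and positive on `(b, S]`, differentiating
`z (v² + φ z)^{-1/2}` gives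
`v ∫_b^S z φ'(z) (v² + φ z)^{-3/2} dz`
`  = 2 (v ∫_b^S (v² + φ z)^{-1/2} dz - v S (v² + φ S)^{-1/2} + b)`.
Since `0 ≤ v (v² + φ z)^{-1/2} ≤ 1`, with pointwise limit `0` wherever `φ z > 0`, dominated
convergence sends the first two terms to `0` as `v → 0⁺`, so the limit is `2 b`.
The theorem is the case `b = 1`, `φ z = a (1 - z^{-(n-2)})`,
for which `z φ'(z) = a (n-2) z^{-(n-2)}`.
-/

theorem rpow_sq_neg_half {v : ℝ} (hv : 0 < v) : (v ^ 2) ^ (-(1:ℝ)/2) = v⁻¹ := by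
  rw [← Real.rpow_natCast, ← Real.rpow_mul hv.le]
  norm_num [Real.rpow_neg_one]

theorem mul_rpow_sq_add_neg_half_le_one {v x : ℝ} (hv : 0 < v) (hx : 0 ≤ x) :
    v * (v ^ 2 + x) ^ (-(1:ℝ)/2) ≤ 1 :=
  calc v * (v ^ 2 + x) ^ (-(1:ℝ)/2) ≤ v * (v ^ 2) ^ (-(1:ℝ)/2) :=
        mul_le_mul_of_nonneg_left
          (Real.rpow_le_rpow_of_nonpos (by positivity) (by linarith) (by norm_num)) hv.le
    _ = 1 := by rw [rpow_sq_neg_half hv, mul_inv_cancel₀ hv.ne']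

theorem tendsto_mul_rpow_sq_add_neg_half {x : ℝ} (hx : x ≠ 0) :
    Tendsto (fun v : ℝ => v * (v ^ 2 + x) ^ (-(1:ℝ)/2)) (𝓝 0) (𝓝 0) := by
  have hc : ContinuousAt (fun v : ℝ => v * (v ^ 2 + x) ^ (-(1:ℝ)/2)) 0 :=
    continuousAt_id.mul ((continuousAt_id.pow 2).add continuousAt_const |>.rpow_const
      (Or.inl (by simpa using hx)))
  simpa using hc.tendsto

section

variable {P P' : ℝ → ℝ} {b S : ℝ}

theorem integral_mul_deriv_div_rpow_three_halves (hbS : b ≤ S)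
    (hP : ∀ z ∈ Icc b S, HasDerivAt P (P' z) z) (hP' : ContinuousOn P' (Icc b S))
    (hpos : ∀ z ∈ Icc b S, 0 < P z) :
    ∫ z in b..S, z * P' z / P z ^ ((3:ℝ)/2) =
      2 * ((∫ z in b..S, P z ^ (-(1:ℝ)/2)) -
        (S * P S ^ (-(1:ℝ)/2) - b * P b ^ (-(1:ℝ)/2))) := by
  have hPc : ContinuousOn P (Icc b S) := fun z hz => (hP z hz).continuousAt.continuousWithinAt
  have hne : ∀ z ∈ Icc b S, P z ≠ 0 := fun z hz => (hpos z hz).ne'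
  have hint₁ : IntervalIntegrable (fun z => P z ^ (-(1:ℝ)/2)) volume b S :=
    (hPc.rpow_const fun z hz => Or.inl (hne z hz)).intervalIntegrable_of_Icc hbS
  have hint₂ : IntervalIntegrable (fun z => z * P' z / P z ^ ((3:ℝ)/2)) volume b S :=
    ((continuousOn_id.mul hP').div (hPc.rpow_const fun z hz => Or.inl (hne z hz))
      fun z hz => (Real.rpow_pos_of_pos (hpos z hz) _).ne').intervalIntegrable_of_Icc hbS
  have hderiv : ∀ z ∈ uIcc b S, HasDerivAt (fun z => z * P z ^ (-(1:ℝ)/2))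
      (P z ^ (-(1:ℝ)/2) - z * P' z / P z ^ ((3:ℝ)/2) / 2) z := by
    intro z hz
    rw [uIcc_of_le hbS] at hz
    refine ((hasDerivAt_id' z).mul ((hP z hz).rpow_const (Or.inl (hne z hz)))).congr_deriv ?_
    rw [show -(1:ℝ)/2 - 1 = -((3:ℝ)/2) by norm_num, Real.rpow_neg (hpos z hz).le]
    ring
  have hFTC := integral_eq_sub_of_hasDerivAt hderiv (hint₁.sub (hint₂.div_const 2))
  rw [integral_sub hint₁ (hint₂.div_const 2), intervalIntegral.integral_div] at hFTC
  linarith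

variable {φ φ' : ℝ → ℝ}

theorem tendsto_mul_integral_rpow_sq_add_neg_half (hbS : b ≤ S)
    (hφ : ContinuousOn φ (Ioc b S)) (hφpos : ∀ z ∈ Ioc b S, 0 < φ z) :
    Tendsto (fun v : ℝ => v * ∫ z in b..S, (v ^ 2 + φ z) ^ (-(1:ℝ)/2))
      (𝓝[>] 0) (𝓝 0) := by
  simp_rw [← intervalIntegral.integral_const_mul]
  have h := tendsto_integral_filter_of_dominated_convergence (μ := volume) (a := b) (b := S)
    (l := 𝓝[>] (0:ℝ)) (F := fun v z => v * (v ^ 2 + φ z) ^ (-(1:ℝ)/2)) (fun _ => (1:ℝ))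
    (f := fun _ => 0) ?meas ?bound intervalIntegrable_const ?lim
  · simpa using h
  case meas =>
    refine Eventually.of_forall fun v => ?_
    rw [uIoc_of_le hbS]
    refine ContinuousOn.aestronglyMeasurable ?_ measurableSet_Ioc
    exact continuousOn_const.mul ((continuousOn_const.add hφ).rpow_const fun z hz =>
      Or.inl (add_pos_of_nonneg_of_pos (sq_nonneg v) (hφpos z hz)).ne')
  case bound =>
    filter_upwards [self_mem_nhdsWithin] with v (hv : 0 < v)
    refine ae_of_all _ fun z hz => ?_
    rw [uIoc_of_le hbS] at hz
    have hφz := (hφpos z hz).le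
    rw [Real.norm_of_nonneg (mul_nonneg hv.le (Real.rpow_nonneg (by positivity) _))]
    exact mul_rpow_sq_add_neg_half_le_one hv hφz
  case lim =>
    refine ae_of_all _ fun z hz => ?_
    rw [uIoc_of_le hbS] at hz
    exact (tendsto_mul_rpow_sq_add_neg_half (hφpos z hz).ne').mono_left nhdsWithin_le_nhds

theorem tendsto_mul_integral_mul_deriv_div_rpow_three_halves (hbS : b < S)
    (hφ : ∀ z ∈ Icc b S, HasDerivAt φ (φ' z) z) (hφ' : ContinuousOn φ' (Icc b S))
    (hφb : φ b = 0) (hφpos : ∀ z ∈ Ioc b S, 0 < φ z) :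
    Tendsto (fun v : ℝ => v * ∫ z in b..S, z * φ' z / (v ^ 2 + φ z) ^ ((3:ℝ)/2))
      (𝓝[>] 0) (𝓝 (2 * b)) := by
  have hφc : ContinuousOn φ (Icc b S) := fun z hz => (hφ z hz).continuousAt.continuousWithinAt
  have hφnonneg : ∀ z ∈ Icc b S, 0 ≤ φ z := fun z hz =>
    (eq_or_lt_of_le hz.1).elim (fun h => h ▸ hφb.ge) fun h => (hφpos z ⟨h, hz.2⟩).le
  have hlim := ((tendsto_mul_integral_rpow_sq_add_neg_half hbS.le (hφc.mono Ioc_subset_Icc_self)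
    hφpos).sub ((tendsto_mul_rpow_sq_add_neg_half (hφpos S ⟨hbS, le_rfl⟩).ne').mono_left
      nhdsWithin_le_nhds |>.const_mul S)).add_const b |>.const_mul 2
  simp only [mul_zero, sub_zero, zero_add] at hlim
  refine hlim.congr' ?_
  filter_upwards [self_mem_nhdsWithin] with v (hv : 0 < v)
  rw [integral_mul_deriv_div_rpow_three_halves hbS.le (fun z hz => (hφ z hz).const_add _) hφ'
    fun z hz => by have := hφnonneg z hz; positivity, hφb, add_zero, rpow_sq_neg_half hv]
  field_simp
  ring

end

theorem hasDerivAt_one_sub_inv_pow (m : ℕ) {z : ℝ} (hz : z ≠ 0) :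
    HasDerivAt (fun z : ℝ => 1 - (z ^ m)⁻¹) (m / z ^ (m + 1)) z := by
  refine ((hasDerivAt_pow m z).inv (pow_ne_zero m hz)).const_sub 1 |>.congr_deriv ?_
  rcases m with _ | m
  · simp
  · rw [Nat.add_sub_cancel]
    field_simp
    ring

theorem one_sub_inv_pow_pos {m : ℕ} (hm : m ≠ 0) {z : ℝ} (hz : 1 < z) :
    0 < 1 - (z ^ m)⁻¹ :=
  sub_pos.2 (inv_lt_one_of_one_lt₀ (one_lt_pow₀ hz hm))

/-- The zero-initial-velocity limit in dimension `n ≥ 3`: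
`v ∫₁^S z^{-(n-2)}/(v² + a(1 - z^{-(n-2)}))^{3/2} dz → 2/(a(n-2))` as `v → 0⁺`. -/
theorem zero_velocity_limit_dim_ge_three (n : ℕ) (hn : 3 ≤ n) (a S : ℝ)
    (ha : 0 < a) (hS : 1 < S) :
    Filter.Tendsto
      (fun v : ℝ => v * ∫ z in (1 : ℝ)..S,
        (z ^ (n - 2))⁻¹ / (v ^ 2 + a * (1 - (z ^ (n - 2))⁻¹)) ^ ((3 : ℝ) / 2))
      (nhdsWithin 0 (Set.Ioi 0)) (nhds (2 / (a * ((n : ℝ) - 2)))) := by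
  set m := n - 2
  have hm : (m : ℝ) = n - 2 := by rw [Nat.cast_sub (by omega)]; norm_num
  have hm0 : (m : ℝ) ≠ 0 := Nat.cast_ne_zero.2 (by omega)
  have hlim := tendsto_mul_integral_mul_deriv_div_rpow_three_halves hS
    (φ := fun z => a * (1 - (z ^ m)⁻¹)) (φ' := fun z => a * (m / z ^ (m + 1)))
    (fun z hz => (hasDerivAt_one_sub_inv_pow m (by linarith [hz.1])).const_mul a)
    (continuousOn_const.mul (continuousOn_const.div (continuousOn_pow _)
      fun z hz => pow_ne_zero _ (by linarith [hz.1])))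
    (by simp) (fun z hz => mul_pos ha (one_sub_inv_pow_pos (by omega) hz.1))
  rw [← hm]
  convert hlim.const_mul (a * m)⁻¹ using 2
  · rw [mul_left_comm (a * m)⁻¹, ← intervalIntegral.integral_const_mul (a * m)⁻¹]
    congr 1
    refine intervalIntegral.integral_congr fun z hz => ?_
    have hz0 : z ≠ 0 := by linarith [(uIcc_of_le hS.le ▸ hz : z ∈ Icc 1 S).1]
    field_simp
    ring
  · field_simp
end

section
/- Let a > 0 and S > 1. Then lim as v → 0⁺ of v · ∫ from 1 to S of dz / (v² + a log z)^{3/2} = 2/a. -/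
/-!
The substitution `z = exp (v² (t - 1) / a)` gives `v² + a log z = v² t`, which turns
`v ∫₁^S dz / (v² + a log z)^{3/2}` into `∫₁^{1 + a log S / v²} exp (v² (t - 1) / a) t^{-3/2} / a dt`.
On the range of integration the exponential factor is at most `S`, and it tends to `1` pointwise
as `v → 0⁺`, so by dominated convergence the integral tends to `∫₁^∞ t^{-3/2} / a dt = 2 / a`.
-/

open MeasureTheory Set Filter Topology

theorem tendsto_setIntegral_Ioc_mul_of_dominated {ι : Type*} {l : Filter ι}
    [l.IsCountablyGenerated] {μ : Measure ℝ} {c C : ℝ} {f h : ℝ → ℝ} {g : ι → ℝ → ℝ}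
    {T : ι → ℝ} (hf : IntegrableOn f (Ioi c) μ) (hg : ∀ i, AEStronglyMeasurable (g i) μ)
    (hT : Tendsto T l atTop) (hgC : ∀ᶠ i in l, ∀ t ∈ Ioc c (T i), ‖g i t‖ ≤ C)
    (hgh : ∀ t ∈ Ioi c, Tendsto (fun i ↦ g i t) l (𝓝 (h t))) :
    Tendsto (fun i ↦ ∫ t in Ioc c (T i), g i t * f t ∂μ) l
      (𝓝 (∫ t in Ioi c, h t * f t ∂μ)) := by
  have hIoc (i : ι) : ∫ t in Ioc c (T i), g i t * f t ∂μ =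
      ∫ t in Ioi c, (Iic (T i)).indicator (fun t ↦ g i t * f t) t ∂μ := by
    rw [setIntegral_indicator measurableSet_Iic, Ioi_inter_Iic]
  simp_rw [hIoc]
  refine tendsto_integral_filter_of_dominated_convergence (fun t ↦ |C| * ‖f t‖)
    (Eventually.of_forall fun i ↦
      ((hg i).restrict.mul hf.aestronglyMeasurable).indicator measurableSet_Iic)
    ?_ (hf.norm.const_mul _) ?_
  · filter_upwards [hgC] with i hi
    refine (ae_restrict_iff' measurableSet_Ioi).2 (Eventually.of_forall fun t ht ↦ ?_)
    by_cases htT : t ≤ T i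
    · rw [indicator_of_mem (show t ∈ Iic (T i) from htT), norm_mul]
      gcongr
      exact (hi t ⟨ht, htT⟩).trans (le_abs_self C)
    · rw [indicator_of_notMem (show t ∉ Iic (T i) from htT), norm_zero]
      positivity
  · refine (ae_restrict_iff' measurableSet_Ioi).2 (Eventually.of_forall fun t ht ↦ ?_)
    refine ((hgh t ht).mul_const (f t)).congr' ?_
    filter_upwards [hT.eventually_ge_atTop t] with i hi
    rw [indicator_of_mem (show t ∈ Iic (T i) from hi)]

theorem tendsto_add_div_sq_nhdsGT_zero_atTop (b : ℝ) {c : ℝ} (hc : 0 < c) :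
    Tendsto (fun v : ℝ ↦ b + c / v ^ 2) (𝓝[>] 0) atTop := by
  have hsq : Tendsto (fun v : ℝ ↦ v ^ 2) (𝓝[>] 0) (𝓝[>] 0) :=
    tendsto_nhdsWithin_of_tendsto_nhds_of_eventually_within _
      ((continuous_pow 2).tendsto' 0 0 (zero_pow two_ne_zero) |>.mono_left nhdsWithin_le_nhds)
      (eventually_nhdsWithin_of_forall fun v (hv : 0 < v) ↦ mem_Ioi.2 (pow_pos hv 2))
  simp_rw [div_eq_mul_inv]
  exact tendsto_atTop_add_const_left _ b (hsq.inv_tendsto_nhdsGT_zero.const_mul_atTop hc)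

theorem exp_sq_div_mul_sub_one_le {a S v t : ℝ} (ha : 0 < a) (hS : 0 < S) (hv : v ≠ 0)
    (ht : t ≤ 1 + a * Real.log S / v ^ 2) : Real.exp (v ^ 2 / a * (t - 1)) ≤ S := by
  rw [← Real.le_log_iff_exp_le hS]
  calc v ^ 2 / a * (t - 1) ≤ v ^ 2 / a * (a * Real.log S / v ^ 2) := by
        gcongr; linarith
    _ = Real.log S := by field_simp

theorem mul_integral_one_div_rpow_log_eq {a S v : ℝ} (ha : 0 < a) (hS : 1 ≤ S) (hv : 0 < v) :
    v * ∫ z in (1 : ℝ)..S, 1 / (v ^ 2 + a * Real.log z) ^ ((3 : ℝ) / 2) =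
      ∫ t in Ioc 1 (1 + a * Real.log S / v ^ 2),
        Real.exp (v ^ 2 / a * (t - 1)) * (t ^ (-(3 / 2 : ℝ)) / a) := by
  set k := v ^ 2 / a with hk
  have hT : 1 ≤ 1 + a * Real.log S / v ^ 2 := by
    have := Real.log_nonneg hS
    simp only [le_add_iff_nonneg_right]
    positivity
  have hsubst := intervalIntegral.integral_comp_mul_deriv_of_deriv_nonneg
    (f := fun t ↦ Real.exp (k * (t - 1))) (f' := fun t ↦ Real.exp (k * (t - 1)) * k)
    (g := fun z ↦ 1 / (v ^ 2 + a * Real.log z) ^ ((3 : ℝ) / 2))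
    (a := 1) (b := 1 + a * Real.log S / v ^ 2) (by fun_prop)
    (fun t _ ↦ ((hasDerivAt_id t).sub_const 1 |>.const_mul k |>.exp).congr_deriv (by simp))
    (fun t _ ↦ by positivity)
  have hend : k * (1 + a * Real.log S / v ^ 2 - 1) = Real.log S := by
    rw [hk]; field_simp; ring
  simp only [sub_self, mul_zero, Real.exp_zero, hend, Real.exp_log (by linarith : 0 < S)]
    at hsubst
  rw [← hsubst, ← intervalIntegral.integral_const_mul, intervalIntegral.integral_of_le hT]
  refine setIntegral_congr_fun measurableSet_Ioc fun t ht ↦ ?_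
  have ht0 : 0 < t := by linarith [ht.1]
  have hbase : v ^ 2 + a * (k * (t - 1)) = v ^ 2 * t := by rw [hk]; field_simp; ring
  have hv3 : (v ^ 2) ^ ((3 : ℝ) / 2) = v ^ 3 := by
    rw [← Real.rpow_natCast v 2, ← Real.rpow_mul hv.le]; norm_num
  rw [Function.comp_apply, Real.log_exp, hbase, Real.mul_rpow (sq_nonneg v) ht0.le, hv3,
    Real.rpow_neg ht0.le, hk]
  field_simp

/-- The zero-initial-velocity limit in dimension two:
`v ∫₁^S dz/(v² + a log z)^{3/2} → 2/a` as `v → 0⁺`. -/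
theorem zero_velocity_limit_dim_two (a S : ℝ) (ha : 0 < a) (hS : 1 < S) :
    Filter.Tendsto
      (fun v : ℝ => v * ∫ z in (1 : ℝ)..S, 1 / (v ^ 2 + a * Real.log z) ^ ((3 : ℝ) / 2))
      (nhdsWithin 0 (Set.Ioi 0)) (nhds (2 / a)) := by
  have hexp_le : ∀ᶠ v in 𝓝[>] (0 : ℝ), ∀ t ∈ Ioc 1 (1 + a * Real.log S / v ^ 2),
      ‖Real.exp (v ^ 2 / a * (t - 1))‖ ≤ S := by
    filter_upwards [self_mem_nhdsWithin] with v (hv : 0 < v) t ht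
    rw [Real.norm_of_nonneg (Real.exp_nonneg _)]
    exact exp_sq_div_mul_sub_one_le ha (by linarith) hv.ne' ht.2
  have hexp_lim (t : ℝ) :
      Tendsto (fun v : ℝ ↦ Real.exp (v ^ 2 / a * (t - 1))) (𝓝[>] 0) (𝓝 1) := by
    have := (by fun_prop : Continuous fun v : ℝ ↦ Real.exp (v ^ 2 / a * (t - 1))).tendsto 0
    simpa using this.mono_left nhdsWithin_le_nhds
  have hf : IntegrableOn (fun t : ℝ ↦ t ^ (-(3 / 2 : ℝ)) / a) (Ioi 1) :=
    (integrableOn_Ioi_rpow_of_lt (by norm_num) one_pos).div_const a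
  have hlim := tendsto_setIntegral_Ioc_mul_of_dominated hf
    (fun v ↦ (by fun_prop : Continuous _).aestronglyMeasurable)
    (tendsto_add_div_sq_nhdsGT_zero_atTop 1 (mul_pos ha (Real.log_pos hS)))
    hexp_le (fun t _ ↦ hexp_lim t)
  have hintegral : ∫ t in Ioi (1 : ℝ), 1 * (t ^ (-(3 / 2 : ℝ)) / a) = 2 / a := by
    simp_rw [one_mul]
    rw [integral_div, integral_Ioi_rpow_of_lt (by norm_num) one_pos]
    norm_num
  rw [hintegral] at hlim
  refine hlim.congr' ?_
  filter_upwards [self_mem_nhdsWithin] with v hv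
  exact (mul_integral_one_div_rpow_log_eq ha hS.le hv).symm
end

section
/- Let α, β, γ, δ be real numbers with β² < γ and δ = γ + 2αβ - β² > 0. Then α ≤ β - √γ if and only if α ≤ -√δ. -/
/-- Algebraic equivalence used in the 4D threshold reduction:
if `β² < γ` and `δ = γ + 2αβ - β² > 0`, then `α ≤ β - √γ ↔ α ≤ -√δ`. -/
theorem threshold_algebraic_equivalence (α β γ δ : ℝ)
    (h1 : β ^ 2 < γ) (h2 : δ = γ + 2 * α * β - β ^ 2) (h3 : 0 < δ) :
    α ≤ β - Real.sqrt γ ↔ α ≤ -Real.sqrt δ := by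
  have hγ : 0 < γ := lt_of_le_of_lt (sq_nonneg β) h1
  set sg := Real.sqrt γ with hsgdef
  set sd := Real.sqrt δ with hsddef
  have hsg : sg ^ 2 = γ := Real.sq_sqrt hγ.le
  have hsd : sd ^ 2 = δ := Real.sq_sqrt h3.le
  have hsg0 : 0 ≤ sg := Real.sqrt_nonneg _
  have hsd0 : 0 < sd := Real.sqrt_pos.mpr h3
  have hβlt : β < sg := by nlinarith
  have hβgt : -sg < β := by nlinarith
  constructor
  · intro h
    have hα0 : α < 0 := by nlinarith
    have hsq : sd ^ 2 ≤ α ^ 2 := by nlinarith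
    nlinarith
  · intro h
    have hα0 : α < 0 := by nlinarith
    have hsq : γ ≤ (β - α) ^ 2 := by nlinarith
    have hba : 0 ≤ β - α := by nlinarith
    nlinarith
end

section
/- Let n ≥ 3 be an integer, k > 0, R > 0 and v₀ ∈ ℝ, and suppose that v₀ < 0 or v₀² < 2k/((n-2) R^{n-2}). Then there is no twice continuously differentiable function X : [0,∞) → (0,∞) satisfying X″(t) = -k / X(t)^{n-1} for all t ≥ 0, X(0) = R and X′(0) = v₀. -/
/-!
Let `V = X′`. Since `X″ < 0`, the velocity decreases, so once `V` becomes negative `X` decreases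
at least linearly and must reach `0`. This settles the case `v₀ < 0`. Otherwise the energy
`V²/2 - k / ((n-2) X^{n-2})` is conserved and negative, which bounds `X` above by some `M`; then
`X″ ≤ -k / M^{n-1}`, so `V` does become negative in finite time.
-/

open Set

theorem sub_le_mul_sub_of_hasDerivAt_le {f f' : ℝ → ℝ} {a C : ℝ}
    (hf : ContinuousOn f (Ici a)) (hderiv : ∀ t, a < t → HasDerivAt f (f' t) t)
    (hle : ∀ t, a < t → f' t ≤ C) {t : ℝ} (ht : a ≤ t) : f t - f a ≤ C * (t - a) := by
  refine (convex_Ici a).image_sub_le_mul_sub_of_deriv_le hf ?_ ?_ a self_mem_Ici t ht ht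
  · rw [interior_Ici]
    exact fun s hs => (hderiv s hs).differentiableAt.differentiableWithinAt
  · rw [interior_Ici]
    exact fun s hs => (hderiv s hs).deriv ▸ hle s hs

theorem exists_lt_of_hasDerivAt_le_neg {f f' : ℝ → ℝ} {a c : ℝ} (hc : c < 0)
    (hf : ContinuousOn f (Ici a)) (hderiv : ∀ t, a < t → HasDerivAt f (f' t) t)
    (hle : ∀ t, a < t → f' t ≤ c) (y : ℝ) : ∃ t, a ≤ t ∧ f t < y := by
  set t := a + (|f a - y| + 1) / -c
  have hta : t - a = (|f a - y| + 1) / -c := by ring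
  have hct : c * (t - a) = -(|f a - y| + 1) := by
    rw [hta, mul_div_assoc', div_neg, mul_div_cancel_left₀ _ hc.ne]
  have hat : a ≤ t := by
    have : 0 < (|f a - y| + 1) / -c := div_pos (by positivity) (neg_pos.2 hc)
    linarith
  refine ⟨t, hat, ?_⟩
  linarith [sub_le_mul_sub_of_hasDerivAt_le hf hderiv hle hat, le_abs_self (f a - y)]

/-- In the paper's notation `m = n - 2`. -/
structure IsPositiveSolution (k : ℝ) (m : ℕ) (X V : ℝ → ℝ) : Prop where
  pos : ∀ t, 0 ≤ t → 0 < X t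
  continuousOn : ContinuousOn X (Ici 0)
  continuousOn_velocity : ContinuousOn V (Ici 0)
  hasDerivAt : ∀ t, 0 < t → HasDerivAt X (V t) t
  hasDerivAt_velocity : ∀ t, 0 < t → HasDerivAt V (-k / X t ^ (m + 1)) t

noncomputable def energy (k : ℝ) (m : ℕ) (X V : ℝ → ℝ) (t : ℝ) : ℝ :=
  V t ^ 2 / 2 - k / (m * X t ^ m)

namespace IsPositiveSolution

variable {k : ℝ} {m : ℕ} {X V : ℝ → ℝ}

theorem of_contDiffOn (hpos : ∀ t, 0 ≤ t → 0 < X t) (hX : ContDiffOn ℝ 2 X (Ici 0))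
    (hode : ∀ t, 0 ≤ t →
      derivWithin (derivWithin X (Ici 0)) (Ici 0) t = -k / X t ^ (m + 1)) :
    IsPositiveSolution k m X (derivWithin X (Ici 0)) := by
  have hV : ContDiffOn ℝ 1 (derivWithin X (Ici 0)) (Ici 0) :=
    hX.derivWithin (uniqueDiffOn_Ici 0) (by norm_num)
  refine ⟨hpos, hX.continuousOn, hV.continuousOn, fun t ht => ?_, fun t ht => ?_⟩
  · exact ((hX.differentiableOn (by norm_num) t ht.le).hasDerivWithinAt).hasDerivAt
      (Ici_mem_nhds ht)
  · rw [← hode t ht.le]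
    exact ((hV.differentiableOn one_ne_zero t ht.le).hasDerivWithinAt).hasDerivAt (Ici_mem_nhds ht)

theorem velocity_antitoneOn (hsol : IsPositiveSolution k m X V) (hk : 0 ≤ k) :
    AntitoneOn V (Ici 0) := by
  intro a ha t ht hat
  have hacc : ∀ s, a < s → -k / X s ^ (m + 1) ≤ 0 := fun s hs =>
    div_nonpos_of_nonpos_of_nonneg (neg_nonpos.2 hk) (pow_pos (hsol.pos s (ha.trans hs.le)) _).le
  have := sub_le_mul_sub_of_hasDerivAt_le (hsol.continuousOn_velocity.mono (Ici_subset_Ici.2 ha))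
    (fun s hs => hsol.hasDerivAt_velocity s (lt_of_le_of_lt ha hs)) hacc hat
  linarith

theorem velocity_nonneg (hsol : IsPositiveSolution k m X V) (hk : 0 ≤ k) {a : ℝ}
    (ha : 0 ≤ a) : 0 ≤ V a := by
  by_contra! hVa
  obtain ⟨t, hat, hXt⟩ := exists_lt_of_hasDerivAt_le_neg hVa
    (hsol.continuousOn.mono (Ici_subset_Ici.2 ha))
    (fun s hs => hsol.hasDerivAt s (lt_of_le_of_lt ha hs))
    (fun s hs => hsol.velocity_antitoneOn hk ha (ha.trans hs.le) hs.le) 0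
  exact hXt.not_ge (hsol.pos t (ha.trans hat)).le

theorem hasDerivAt_energy (hsol : IsPositiveSolution k m X V) (hm : m ≠ 0) {t : ℝ}
    (ht : 0 < t) : HasDerivAt (energy k m X V) 0 t := by
  have hXt := hsol.pos t ht.le
  have hden : (m : ℝ) * X t ^ m ≠ 0 := by positivity
  refine (((hsol.hasDerivAt_velocity t ht).fun_pow 2).div_const 2 |>.sub
    ((hasDerivAt_const t k).div (((hsol.hasDerivAt t ht).fun_pow m).const_mul (m : ℝ))
      hden)).congr_deriv ?_
  obtain ⟨j, rfl⟩ : ∃ j, m = j + 1 := ⟨m - 1, by omega⟩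
  field_simp
  simp only [Nat.add_sub_cancel, Nat.cast_ofNat]
  ring

theorem energy_le_energy_zero (hsol : IsPositiveSolution k m X V) (hm : m ≠ 0) {t : ℝ}
    (ht : 0 ≤ t) : energy k m X V t ≤ energy k m X V 0 := by
  have hcont : ContinuousOn (energy k m X V) (Ici 0) :=
    hsol.continuousOn_velocity.pow 2 |>.div_const 2 |>.sub <| continuousOn_const.div
      (continuousOn_const.mul (hsol.continuousOn.pow m))
      fun s hs => mul_ne_zero (Nat.cast_ne_zero.2 hm) (pow_ne_zero _ (hsol.pos s hs).ne')
  have := sub_le_mul_sub_of_hasDerivAt_le hcont (fun s hs => hsol.hasDerivAt_energy hm hs)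
    (fun _ _ => le_rfl) ht
  linarith

theorem exists_le_of_energy_neg (hsol : IsPositiveSolution k m X V) (hm : m ≠ 0)
    (hE : energy k m X V 0 < 0) : ∃ M, 0 < M ∧ ∀ t, 0 ≤ t → X t ≤ M := by
  set e := -energy k m X V 0
  have he : 0 < e := by linarith
  refine ⟨max 1 (k / (m * e)), by positivity, fun t ht => ?_⟩
  have hXt := hsol.pos t ht
  have hkin : e ≤ k / (m * X t ^ m) := by
    have hEt : energy k m X V t = V t ^ 2 / 2 - k / (m * X t ^ m) := rfl
    linarith [hsol.energy_le_energy_zero hm ht, sq_nonneg (V t)]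
  have hXm : X t ^ m ≤ k / (m * e) := by
    rw [le_div_iff₀ (by positivity)] at hkin
    rw [le_div_iff₀ (by positivity)]
    linarith
  rcases le_total (X t) 1 with hX1 | hX1
  · exact hX1.trans (le_max_left _ _)
  · exact (le_self_pow₀ hX1 hm).trans (hXm.trans (le_max_right _ _))

theorem energy_zero_nonneg (hsol : IsPositiveSolution k m X V) (hk : 0 < k) (hm : m ≠ 0) :
    0 ≤ energy k m X V 0 := by
  by_contra! hE
  obtain ⟨M, hM, hXM⟩ := hsol.exists_le_of_energy_neg hm hE
  have hacc : ∀ t, 0 < t → -k / X t ^ (m + 1) ≤ -(k / M ^ (m + 1)) := fun t ht => by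
    have hXt := hsol.pos t ht.le
    rw [neg_div, neg_le_neg_iff]
    exact div_le_div_of_nonneg_left hk.le (by positivity)
      (pow_le_pow_left₀ hXt.le (hXM t ht.le) _)
  obtain ⟨t, ht, hVt⟩ := exists_lt_of_hasDerivAt_le_neg (neg_neg_of_pos (by positivity))
    hsol.continuousOn_velocity hsol.hasDerivAt_velocity hacc 0
  exact hVt.not_ge (hsol.velocity_nonneg hk.le ht)

end IsPositiveSolution

theorem attractive_no_global_solution_general (n : ℕ) (hn : 3 ≤ n) (k R v₀ : ℝ)
    (hk : 0 < k)
    (hv : v₀ < 0 ∨ v₀ ^ 2 < 2 * k / (((n : ℝ) - 2) * R ^ (n - 2))) :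
    ¬ ∃ X : ℝ → ℝ,
      (∀ t : ℝ, 0 ≤ t → 0 < X t) ∧
      ContDiffOn ℝ 2 X (Set.Ici 0) ∧
      (∀ t : ℝ, 0 ≤ t →
        derivWithin (derivWithin X (Set.Ici 0)) (Set.Ici 0) t = -k / X t ^ (n - 1)) ∧
      X 0 = R ∧ derivWithin X (Set.Ici 0) 0 = v₀ := by
  rintro ⟨X, hpos, hX, hode, rfl, rfl⟩
  obtain ⟨m, rfl⟩ : ∃ m, n = m + 2 := ⟨n - 2, by omega⟩
  have hm : m ≠ 0 := by omega
  have hsol : IsPositiveSolution k m X (derivWithin X (Ici 0)) :=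
    .of_contDiffOn hpos hX fun t ht => by simpa using hode t ht
  rcases hv with hv | hv
  · exact hv.not_ge (hsol.velocity_nonneg hk.le le_rfl)
  · have hE := hsol.energy_zero_nonneg hk hm
    have hcast : ((m + 2 : ℕ) : ℝ) - 2 = m := by push_cast; ring
    rw [hcast, Nat.add_sub_cancel, mul_div_assoc] at hv
    unfold energy at hE
    linarith

/-- Finite-time collapse in the attractive case: if `v₀ < 0` or
`v₀² < 2k/((n-2) R^{n-2})`, no global positive `C²` solution of
`X″ = -k / X^{n-1}` with `X(0) = R`, `X′(0) = v₀` exists on `[0,∞)`. -/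
theorem attractive_no_global_solution (n : ℕ) (hn : 3 ≤ n) (k R v₀ : ℝ)
    (hk : 0 < k) (hR : 0 < R)
    (hv : v₀ < 0 ∨ v₀ ^ 2 < 2 * k / (((n : ℝ) - 2) * R ^ (n - 2))) :
    ¬ ∃ X : ℝ → ℝ,
      (∀ t : ℝ, 0 ≤ t → 0 < X t) ∧
      ContDiffOn ℝ 2 X (Set.Ici 0) ∧
      (∀ t : ℝ, 0 ≤ t →
        derivWithin (derivWithin X (Set.Ici 0)) (Set.Ici 0) t = -k / X t ^ (n - 1)) ∧
      X 0 = R ∧ derivWithin X (Set.Ici 0) 0 = v₀ :=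
  attractive_no_global_solution_general n hn k R v₀ hk hv
end
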